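/- arXiv:1806.04451 — 7 statements merged into one kernel-verified Lean document; each statement's English description precedes it below -/
import Mathlib

section
/- Let G be a finite connected simple graph on at least 2 vertices. Then μ(G) + 1 ≤ ml(G), i.e. the minimum number of leaves of a spanning tree of G is at least one more than the path covering number of G. -/
open SimpleGraph

/-- Number of leaves (degree-one vertices) of a graph. -/
noncomputable def leafCount {V : Type} (T : SimpleGraph V) : ℕ :=
  Set.ncard {v | (T.neighborSet v).ncard = 1}

/-- The minimum leaf number: the minimum number of leaves of a spanning tree. -/
noncomputable def ml {V : Type} (G : SimpleGraph V) : ℕ :=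
  sInf {k | ∃ T : SimpleGraph V, T ≤ G ∧ T.IsTree ∧ leafCount T = k}

/-- `S` is a vertex-disjoint path cover of `G`: each member is the vertex set of a
path of `G`, and the members partition the vertex set. -/
def IsPathCover {V : Type} (G : SimpleGraph V) (S : Finset (Set V)) : Prop :=
  (∀ A ∈ S, ∃ (u v : V) (p : G.Walk u v), p.IsPath ∧ {x | x ∈ p.support} = A) ∧
  (∀ x : V, ∃! A, A ∈ S ∧ x ∈ A)

/-- The path covering number. -/
noncomputable def pathCoverNumber {V : Type} (G : SimpleGraph V) : ℕ :=
  sInf {k | ∃ S : Finset (Set V), IsPathCover G S ∧ S.card = k}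

/-!
Induct on the number of vertices of a spanning tree `T`: remove a leaf `v` with neighbour `u`
and cover `T - v` by fewer paths than it has leaves (or by one path, when `T - v` is a single
vertex: hence the bound `max 2`). Pull that cover back along the map `V → V ∖ {v}` sending `v`
to `u`. If `u` ends its path this is a path cover of `T`, and `T - v` has at most as many leaves
as `T`, since only `u` can become a new leaf. Otherwise `u` is interior to its path, so it is
not a leaf of `T - v`, which therefore has one leaf less than `T`, and `{v}` is split off as a
path of its own. A path cover of a spanning tree is one of `G`.
-/

section

variable {V : Type}

def leafSet (T : SimpleGraph V) : Set V := {v | (T.neighborSet v).ncard = 1}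

lemma leafCount_eq_ncard_leafSet (T : SimpleGraph V) : leafCount T = (leafSet T).ncard := rfl

def IsPathVertexSet (G : SimpleGraph V) (A : Set V) : Prop :=
  ∃ (u v : V) (p : G.Walk u v), p.IsPath ∧ {x | x ∈ p.support} = A

section Partition

variable {α β : Type*} [DecidableEq (Set α)]

lemma existsUnique_mem_image_preimage {S : Finset (Set β)} (f : α → β)
    (hS : ∀ y, ∃! B, B ∈ S ∧ y ∈ B) (x : α) :
    ∃! A, A ∈ S.image (f ⁻¹' ·) ∧ x ∈ A := by
  obtain ⟨B, ⟨hB, hxB⟩, huniq⟩ := hS (f x)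
  refine ⟨f ⁻¹' B, ⟨Finset.mem_image_of_mem _ hB, hxB⟩, ?_⟩
  rintro _ ⟨hA, hxA⟩
  obtain ⟨B', hB', rfl⟩ := Finset.mem_image.mp hA
  rw [huniq B' ⟨hB', hxA⟩]

lemma existsUnique_mem_insert_singleton_image_sdiff {S : Finset (Set α)} (a : α)
    (hS : ∀ y, ∃! B, B ∈ S ∧ y ∈ B) (x : α) :
    ∃! A, A ∈ insert {a} (S.image (· \ {a})) ∧ x ∈ A := by
  by_cases hx : x = a
  · subst hx
    refine ⟨{x}, ⟨Finset.mem_insert_self _ _, rfl⟩, ?_⟩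
    rintro A ⟨hA, hxA⟩
    rcases Finset.mem_insert.mp hA with rfl | hA
    · rfl
    · obtain ⟨B, -, rfl⟩ := Finset.mem_image.mp hA
      exact absurd rfl hxA.2
  · obtain ⟨B, ⟨hB, hxB⟩, huniq⟩ := hS x
    refine ⟨B \ {a}, ⟨Finset.mem_insert_of_mem (Finset.mem_image_of_mem _ hB), hxB, hx⟩, ?_⟩
    rintro A ⟨hA, hxA⟩
    rcases Finset.mem_insert.mp hA with rfl | hA
    · exact absurd hxA hx
    · obtain ⟨B', hB', rfl⟩ := Finset.mem_image.mp hA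
      rw [huniq B' ⟨hB', hxA.1⟩]

end Partition

section PathVertexSet

variable {G H : SimpleGraph V}

lemma IsPathVertexSet.singleton (x : V) : IsPathVertexSet G {x} :=
  ⟨x, x, .nil, .nil, by ext; simp⟩

lemma IsPathVertexSet.image {W : Type} {K : SimpleGraph W} {A : Set V} (f : G →g K)
    (hf : Function.Injective f) (hA : IsPathVertexSet G A) : IsPathVertexSet K (f '' A) := by
  obtain ⟨u, v, p, hp, rfl⟩ := hA
  exact ⟨f u, f v, p.map f, hp.map hf, by ext; simp [Walk.support_map]⟩

lemma IsPathVertexSet.image_val {s : Set V} {A : Set s} (hA : IsPathVertexSet (G.induce s) A) :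
    IsPathVertexSet G (Subtype.val '' A) :=
  hA.image (Embedding.induce s).toHom Subtype.val_injective

lemma IsPathVertexSet.insert_image_val {s : Set V} {u w : s} {p : (G.induce s).Walk u w}
    (hp : p.IsPath) {v : V} (hv : v ∉ s) (hvu : G.Adj v u) :
    IsPathVertexSet G (insert v (Subtype.val '' {x | x ∈ p.support})) := by
  let f : G.induce s →g G := (Embedding.induce s).toHom
  have hvp : v ∉ (p.map f).support := by
    simp only [Walk.support_map, List.mem_map, not_exists, not_and]
    exact fun y _ hy => hv (hy ▸ y.2)
  have hvu' : G.Adj v (f u) := hvu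
  refine ⟨v, f w, .cons hvu' (p.map f), (hp.map Subtype.val_injective).cons hvp, ?_⟩
  ext x
  rw [Set.mem_ofPred_eq, Walk.support_cons, List.mem_cons,
    Walk.support_map, List.mem_map]
  simp [f]

lemma SimpleGraph.adj_of_neighborSet_eq_singleton {u v : V} (h : G.neighborSet v = {u}) :
    G.Adj v u := by
  rw [← mem_neighborSet, h]
  rfl

lemma IsPathCover.mono {S : Finset (Set V)} (h : G ≤ H) (hS : IsPathCover G S) :
    IsPathCover H S := by
  refine ⟨fun A hA => ?_, hS.2⟩
  obtain ⟨u, v, p, hp, rfl⟩ := hS.1 A hA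
  exact ⟨u, v, p.mapLe h, hp.mapLe h, by simp⟩

end PathVertexSet

lemma SimpleGraph.ncard_neighborSet_eq_degree (G : SimpleGraph V) (v : V)
    [Fintype (G.neighborSet v)] :
    (G.neighborSet v).ncard = G.degree v := by
  rw [← card_neighborSet_eq_degree, ← Nat.card_eq_fintype_card, Nat.card_coe_set_eq]

lemma SimpleGraph.Walk.IsPath.two_le_ncard_neighborSet [Finite V] {G : SimpleGraph V}
    {a b x : V} {p : G.Walk a b} (hp : p.IsPath) (hx : x ∈ p.support) (hxa : x ≠ a)
    (hxb : x ≠ b) :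
    2 ≤ (G.neighborSet x).ncard := by
  obtain ⟨i, rfl, hi⟩ := Walk.mem_support_iff_exists_getVert.mp hx
  have hi0 : i ≠ 0 := by rintro rfl; exact hxa p.getVert_zero
  have hil : i < p.length := lt_of_le_of_ne hi (by rintro rfl; exact hxb p.getVert_length)
  rw [← hp.ncard_neighborSet_toSubgraph_internal_eq_two hi0 hil]
  exact Set.ncard_le_ncard (p.toSubgraph.neighborSet_subset _)

lemma SimpleGraph.IsTree.two_le_leafCount [Finite V] [Nontrivial V] {T : SimpleGraph V}
    (hT : T.IsTree) : 2 ≤ leafCount T := by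
  classical
  have := Fintype.ofFinite V
  obtain ⟨a, b, hab, ha, hb⟩ := hT.exists_ne_and_degree_eq_one
  have hleaf {x : V} (hx : T.degree x = 1) : x ∈ leafSet T := by
    rw [leafSet, Set.mem_ofPred_eq, ncard_neighborSet_eq_degree, hx]
  exact (Set.one_lt_ncard_iff (Set.toFinite _)).mpr ⟨a, b, hleaf ha, hleaf hb, hab⟩

lemma SimpleGraph.IsTree.exists_neighborSet_eq_singleton [Finite V] [Nontrivial V]
    {T : SimpleGraph V} (hT : T.IsTree) :
    ∃ (v : V) (u : ({v}ᶜ : Set V)), T.neighborSet v = {(u : V)} := by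
  classical
  have := Fintype.ofFinite V
  obtain ⟨v, hv⟩ := hT.exists_vert_degree_one_of_nontrivial
  rw [← ncard_neighborSet_eq_degree, Set.ncard_eq_one] at hv
  obtain ⟨u, hu⟩ := hv
  exact ⟨v, ⟨u, (adj_of_neighborSet_eq_singleton hu).ne'⟩, hu⟩

section DeleteLeaf

variable {T : SimpleGraph V} {v : V} {u : ({v}ᶜ : Set V)}

lemma SimpleGraph.IsTree.induce_compl_singleton [Finite V] (hT : T.IsTree)
    (hv : T.neighborSet v = {(u : V)}) : (T.induce {v}ᶜ).IsTree := by
  classical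
  have := Fintype.ofFinite V
  refine ⟨hT.connected.induce_compl_singleton_of_degree_eq_one ?_, hT.isAcyclic.induce _⟩
  rw [← ncard_neighborSet_eq_degree, hv, Set.ncard_singleton]

lemma image_neighborSet_induce_compl_singleton (hv : T.neighborSet v = {(u : V)})
    {w : ({v}ᶜ : Set V)} (hwu : w ≠ u) :
    Subtype.val '' (T.induce {v}ᶜ).neighborSet w = T.neighborSet w := by
  ext y
  constructor
  · rintro ⟨z, hz, rfl⟩
    exact hz
  · intro hy
    have hyv : y ≠ v := by
      rintro rfl
      have : (w : V) ∈ T.neighborSet y := hy.symm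
      exact hwu (Subtype.ext (by rwa [hv] at this))
    exact ⟨⟨y, hyv⟩, hy, rfl⟩

lemma image_leafSet_induce_compl_singleton_subset (hv : T.neighborSet v = {(u : V)}) :
    Subtype.val '' (leafSet (T.induce {v}ᶜ) \ {u}) ⊆ leafSet T \ {v} := by
  rintro _ ⟨w, ⟨hw, hwu⟩, rfl⟩
  refine ⟨?_, w.2⟩
  rw [leafSet, Set.mem_ofPred_eq, ← image_neighborSet_induce_compl_singleton hv hwu,
    Set.ncard_image_of_injective _ Subtype.val_injective]
  exact hw

lemma mem_leafSet_of_neighborSet_eq_singleton (hv : T.neighborSet v = {(u : V)}) :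
    v ∈ leafSet T := by
  rw [leafSet, Set.mem_ofPred_eq, hv, Set.ncard_singleton]

lemma leafCount_induce_compl_singleton_le [Finite V] (hv : T.neighborSet v = {(u : V)}) :
    leafCount (T.induce {v}ᶜ) ≤ leafCount T := by
  calc leafCount (T.induce {v}ᶜ) ≤ (leafSet (T.induce {v}ᶜ) \ {u}).ncard + 1 := by
        rw [leafCount_eq_ncard_leafSet, ← Set.ncard_insert_of_notMem (fun h => h.2 rfl),
          Set.insert_sdiff_singleton]
        exact Set.ncard_le_ncard_insert _ _
    _ ≤ (leafSet T \ {v}).ncard + 1 := by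
        rw [← Set.ncard_image_of_injective _ Subtype.val_injective]
        gcongr
        · exact Set.toFinite _
        · exact image_leafSet_induce_compl_singleton_subset hv
    _ = leafCount T :=
        Set.ncard_sdiff_singleton_add_one (mem_leafSet_of_neighborSet_eq_singleton hv)

lemma leafCount_induce_compl_singleton_lt [Finite V] (hv : T.neighborSet v = {(u : V)})
    (hu : u ∉ leafSet (T.induce {v}ᶜ)) : leafCount (T.induce {v}ᶜ) < leafCount T := by
  calc leafCount (T.induce {v}ᶜ) = (leafSet (T.induce {v}ᶜ) \ {u}).ncard := by
        rw [Set.sdiff_singleton_eq_self hu, leafCount_eq_ncard_leafSet]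
    _ ≤ (leafSet T \ {v}).ncard := by
        rw [← Set.ncard_image_of_injective _ Subtype.val_injective]
        exact Set.ncard_le_ncard (image_leafSet_induce_compl_singleton_subset hv)
    _ < leafCount T :=
        Set.ncard_sdiff_singleton_lt_of_mem (mem_leafSet_of_neighborSet_eq_singleton hv)

end DeleteLeaf

def retractCompl [DecidableEq V] {v : V} (u : ({v}ᶜ : Set V)) (x : V) : ({v}ᶜ : Set V) :=
  if h : x = v then u else ⟨x, h⟩

lemma preimage_retractCompl [DecidableEq V] {v : V} (u : ({v}ᶜ : Set V))
    (A : Set ({v}ᶜ : Set V)) :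
    retractCompl u ⁻¹' A = Subtype.val '' A ∪ {x | x = v ∧ u ∈ A} := by
  ext x
  by_cases hx : x = v
  · subst hx
    simp [retractCompl]
  · simp [retractCompl, hx]

section Covers

variable [DecidableEq V] [DecidableEq (Set V)] {T : SimpleGraph V} {v : V} {u : ({v}ᶜ : Set V)}
  {S : Finset (Set ({v}ᶜ : Set V))}

lemma isPathCover_image_preimage_retractCompl (hv : T.neighborSet v = {(u : V)})
    (hS : IsPathCover (T.induce {v}ᶜ) S)
    (hend : ∃ (w : ({v}ᶜ : Set V)) (p : (T.induce {v}ᶜ).Walk u w),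
      p.IsPath ∧ {x | x ∈ p.support} ∈ S) :
    IsPathCover T (S.image (retractCompl u ⁻¹' ·)) := by
  obtain ⟨w, p, hp, hpS⟩ := hend
  refine ⟨fun B hB => (?_ : IsPathVertexSet T B), existsUnique_mem_image_preimage _ hS.2⟩
  obtain ⟨A, hA, rfl⟩ := Finset.mem_image.mp hB
  rw [preimage_retractCompl]
  by_cases huA : u ∈ A
  · obtain rfl : A = {x | x ∈ p.support} :=
      (hS.2 u).unique ⟨hA, huA⟩ ⟨hpS, p.start_mem_support⟩
    simpa [huA] using
      IsPathVertexSet.insert_image_val hp (by simp) (adj_of_neighborSet_eq_singleton hv)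
  · have hA' : IsPathVertexSet _ A := hS.1 A hA
    simpa [huA] using hA'.image_val

lemma isPathCover_insert_singleton_image_sdiff (u : ({v}ᶜ : Set V))
    (hS : IsPathCover (T.induce {v}ᶜ) S) :
    IsPathCover T (insert {v} ((S.image (retractCompl u ⁻¹' ·)).image (· \ {v}))) := by
  refine ⟨fun B hB => (?_ : IsPathVertexSet T B),
    existsUnique_mem_insert_singleton_image_sdiff v (existsUnique_mem_image_preimage _ hS.2)⟩
  rcases Finset.mem_insert.mp hB with rfl | hB
  · exact IsPathVertexSet.singleton v
  · obtain ⟨_, hB', rfl⟩ := Finset.mem_image.mp hB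
    obtain ⟨A, hA, rfl⟩ := Finset.mem_image.mp hB'
    have : retractCompl u ⁻¹' A \ {v} = Subtype.val '' A := by
      rw [preimage_retractCompl]
      ext x
      by_cases hx : x = v <;> simp [hx]
    have hA' : IsPathVertexSet _ A := hS.1 A hA
    rw [this]
    exact hA'.image_val

end Covers

lemma exists_isPathCover_card_lt_of_induce_compl_singleton [Finite V] {T : SimpleGraph V}
    {v : V} {u : ({v}ᶜ : Set V)} (hv : T.neighborSet v = {(u : V)})
    (hT : (T.induce {v}ᶜ).IsTree)
    {S : Finset (Set ({v}ᶜ : Set V))} (hS : IsPathCover (T.induce {v}ᶜ) S)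
    (hcard : S.card < max 2 (leafCount (T.induce {v}ᶜ))) :
    ∃ S' : Finset (Set V), IsPathCover T S' ∧ S'.card < max 2 (leafCount T) := by
  classical
  have hpull := Finset.card_image_le (s := S) (f := (retractCompl u ⁻¹' ·))
  by_cases hend : ∃ (w : ({v}ᶜ : Set V)) (p : (T.induce {v}ᶜ).Walk u w),
      p.IsPath ∧ {x | x ∈ p.support} ∈ S
  · refine ⟨_, isPathCover_image_preimage_retractCompl hv hS hend, ?_⟩
    have := leafCount_induce_compl_singleton_le hv
    omega
  · obtain ⟨A, ⟨hA, huA⟩, -⟩ := hS.2 u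
    obtain ⟨a, b, q, hq, rfl⟩ := hS.1 A hA
    have hua : u ≠ a := by rintro rfl; exact hend ⟨b, q, hq, hA⟩
    have hub : u ≠ b := by
      rintro rfl
      exact hend ⟨a, q.reverse, hq.reverse, by simpa using hA⟩
    have hdeg := hq.two_le_ncard_neighborSet huA hua hub
    have hleaf : u ∉ leafSet (T.induce {v}ᶜ) := fun h => by
      rw [leafSet, Set.mem_ofPred_eq] at h
      omega
    obtain ⟨y, hy⟩ : ((T.induce {v}ᶜ).neighborSet u).Nonempty :=
      Set.nonempty_of_ncard_ne_zero (by omega)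
    have : Nontrivial ({v}ᶜ : Set V) := ⟨⟨u, y, (T.induce {v}ᶜ).ne_of_adj hy⟩⟩
    have := hT.two_le_leafCount
    have := leafCount_induce_compl_singleton_lt hv hleaf
    refine ⟨_, isPathCover_insert_singleton_image_sdiff u hS, ?_⟩
    have := Finset.card_insert_le ({v} : Set V)
      ((S.image (retractCompl u ⁻¹' ·)).image (· \ {v}))
    have := Finset.card_image_le (s := S.image (retractCompl u ⁻¹' ·)) (f := (· \ {v}))
    omega

theorem SimpleGraph.IsTree.exists_isPathCover_card_lt [Finite V] {T : SimpleGraph V}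
    (hT : T.IsTree) :
    ∃ S : Finset (Set V), IsPathCover T S ∧ S.card < max 2 (leafCount T) := by
  induction hn : Nat.card V generalizing V with
  | zero =>
    have := hT.connected.nonempty
    exact absurd hn Nat.card_pos.ne'
  | succ n ih =>
    rcases subsingleton_or_nontrivial V with _ | _
    · obtain ⟨x⟩ := hT.connected.nonempty
      refine ⟨{{x}}, ⟨fun A hA => ?_, fun y => ⟨{x}, ?_, ?_⟩⟩, by simp⟩
      · rw [Finset.mem_singleton.mp hA]
        exact IsPathVertexSet.singleton x
      · simp [Subsingleton.elim y x]
      · simp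
    · obtain ⟨v, u, hv⟩ := hT.exists_neighborSet_eq_singleton
      have hT' := hT.induce_compl_singleton hv
      refine (ih hT' ?_).elim fun S ⟨hS, hcard⟩ =>
        exists_isPathCover_card_lt_of_induce_compl_singleton hv hT' hS hcard
      rw [Nat.card_coe_set_eq, Set.ncard_compl, hn, Set.ncard_singleton, Nat.add_sub_cancel]

end

theorem stmt_0 {V : Type} [Fintype V] (G : SimpleGraph V)
    (hconn : G.Connected) (hcard : 2 ≤ Fintype.card V) :
    pathCoverNumber G + 1 ≤ ml G := by
  have : Nontrivial V := Fintype.one_lt_card_iff_nontrivial.mp hcard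
  obtain ⟨T₀, hT₀G, hT₀⟩ := hconn.exists_isTree_le
  refine le_csInf ⟨_, T₀, hT₀G, hT₀, rfl⟩ ?_
  rintro _ ⟨T, hTG, hT, rfl⟩
  obtain ⟨S, hS, hcardS⟩ := hT.exists_isPathCover_card_lt
  have hμ : pathCoverNumber G ≤ S.card := Nat.sInf_le ⟨S, hS.mono hTG, rfl⟩
  have := hT.two_le_leafCount
  omega
end

section
/- Let G be a finite connected simple graph on at least 2 vertices. Then ml(G) ≤ 2·μ(G), i.e. G has a spanning tree with at most twice as many leaves as the path covering number of G. -/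
open SimpleGraph

/-
Take a minimum path cover and let `F` be the union of its paths. Distinct paths share no vertex,
so `F` is a forest, and it extends to a spanning tree `T` of `G`. A vertex that is interior to its
path already has two neighbours in `F`, hence in `T`; so every leaf of `T` is an end of one of the
paths, and there are at most `2 μ(G)` of those.
-/

namespace SimpleGraph

variable {V : Type} {G : SimpleGraph V}

theorem Walk.IsPath.isAcyclic_spanningCoe_toSubgraph {u v : V} {p : G.Walk u v}
    (hp : p.IsPath) : p.toSubgraph.spanningCoe.IsAcyclic := by
  induction p with
  | nil => exact isAcyclic_bot.anti fun x y h => by simp at h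
  | @cons u w v h q ih =>
    have hu : u ∉ q.support := (cons_isPath_iff h q).1 hp |>.2
    have hunreach : ¬q.toSubgraph.spanningCoe.Reachable u w := by
      rintro ⟨_ | ⟨hadj, _⟩⟩
      · exact h.ne rfl
      · exact hu (q.mem_verts_toSubgraph.1 hadj.fst_mem)
    have hsplit : (cons h q).toSubgraph.spanningCoe = q.toSubgraph.spanningCoe ⊔ edge u w := by
      rw [sup_comm, edge, ← Subgraph.spanningCoe_subgraphOfAdj h]
      rfl
    rw [hsplit]
    exact (ih hp.of_cons).sup_edge_of_not_reachable hunreach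

theorem isAcyclic_iSup_of_forall_adj_fiber {ι : Type*} {H : ι → SimpleGraph V} (f : V → ι)
    (hf : ∀ i x y, (H i).Adj x y → f x = i) (hH : ∀ i, (H i).IsAcyclic) :
    (⨆ i, H i).IsAcyclic := by
  have hedges : ∀ {a b} (w : (⨆ i, H i).Walk a b), ∀ e ∈ w.edges, e ∈ (H (f a)).edgeSet := by
    intro a b w
    induction w with
    | nil => simp
    | @cons a c b h q ih =>
      obtain ⟨i, hi⟩ := iSup_adj.1 h
      obtain rfl := hf i a c hi
      intro e he
      rcases List.mem_cons.1 he with rfl | he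
      · exact hi
      · exact hf _ c a hi.symm ▸ ih e he
  intro v c hc
  exact hH (f v) (c.transfer _ (hedges c)) (hc.transfer (hedges c))

theorem Walk.IsPath.ncard_neighborSet_toSubgraph_eq_two_of_ne {u v x : V} {p : G.Walk u v}
    (hp : p.IsPath) (hx : x ∈ p.support) (hxu : x ≠ u) (hxv : x ≠ v) :
    (p.toSubgraph.neighborSet x).ncard = 2 := by
  obtain ⟨n, rfl, hn⟩ := Walk.mem_support_iff_exists_getVert.1 hx
  refine hp.ncard_neighborSet_toSubgraph_internal_eq_two (fun h => hxu ?_)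
    (lt_of_le_of_ne hn fun h => hxv ?_) <;> simp [h]

theorem Connected.exists_isTree_leafCount_le_of_paths [Finite V] {ι : Type} [Fintype ι]
    (hG : G.Connected) {u v : ι → V} (p : ∀ i, G.Walk (u i) (v i)) (hp : ∀ i, (p i).IsPath)
    (f : V → ι) (hf : ∀ i x, x ∈ (p i).support ↔ f x = i) :
    ∃ T ≤ G, T.IsTree ∧ leafCount T ≤ 2 * Fintype.card ι := by
  classical
  set F := ⨆ i, (p i).toSubgraph.spanningCoe
  have hFG : F ≤ G := iSup_le fun i => Subgraph.spanningCoe_le _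
  have hF : F.IsAcyclic := isAcyclic_iSup_of_forall_adj_fiber f
    (fun i x _ h => (hf i x).1 ((p i).mem_verts_toSubgraph.1 h.fst_mem))
    (fun i => (hp i).isAcyclic_spanningCoe_toSubgraph)
  obtain ⟨T, hFT, hTG, hT⟩ := hG.exists_isTree_le_of_le_of_isAcyclic hFG hF
  refine ⟨T, hTG, hT, ?_⟩
  set ends := Finset.univ.image u ∪ Finset.univ.image v
  have hleaves : {x | (T.neighborSet x).ncard = 1} ⊆ ends := by
    intro x hx
    by_contra hend
    simp only [ends, Finset.coe_union, Finset.coe_image, Finset.coe_univ, Set.image_univ,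
      Set.mem_union, Set.mem_range, not_or, not_exists] at hend
    have htwo := (hp (f x)).ncard_neighborSet_toSubgraph_eq_two_of_ne ((hf _ x).2 rfl)
      (Ne.symm (hend.1 _)) (Ne.symm (hend.2 _))
    have hsub : (p (f x)).toSubgraph.neighborSet x ⊆ T.neighborSet x :=
      fun y hy => hFT (iSup_adj.2 ⟨f x, hy⟩)
    have hleaf : (T.neighborSet x).ncard = 1 := hx
    have := Set.ncard_le_ncard hsub
    omega
  calc leafCount T ≤ ends.card := by
        rw [leafCount, ← Set.ncard_coe_finset]
        exact Set.ncard_le_ncard hleaves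
    _ ≤ 2 * Fintype.card ι := by
        grind [Finset.card_union_le, Finset.card_image_le, Finset.card_univ]

end SimpleGraph

theorem isPathCover_image_singleton {V : Type} [Fintype V] [DecidableEq V] (G : SimpleGraph V) :
    IsPathCover G (Finset.univ.image fun x : V => ({x} : Set V)) := by
  refine ⟨?_, fun x => ⟨{x}, by simp, ?_⟩⟩
  · simp only [Finset.mem_image, Finset.mem_univ, true_and, forall_exists_index,
      forall_apply_eq_imp_iff]
    exact fun x => ⟨x, x, .nil, .nil, by simp⟩
  · simp

theorem exists_isPathCover_card_eq_pathCoverNumber {V : Type} [Fintype V] (G : SimpleGraph V) :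
    ∃ S, IsPathCover G S ∧ S.card = pathCoverNumber G := by
  classical
  exact Nat.sInf_mem (s := {k | ∃ S : Finset (Set V), IsPathCover G S ∧ S.card = k})
    ⟨_, _, isPathCover_image_singleton G, rfl⟩

theorem IsPathCover.exists_isTree_leafCount_le {V : Type} [Finite V] {G : SimpleGraph V}
    {S : Finset (Set V)} (hG : G.Connected) (hS : IsPathCover G S) :
    ∃ T ≤ G, T.IsTree ∧ leafCount T ≤ 2 * S.card := by
  choose u v p hp hsupport using fun A : S => hS.1 A A.2
  choose f hf hf_unique using hS.2
  have hmem : ∀ A x, x ∈ (p A).support ↔ (⟨f x, (hf x).1⟩ : S) = A := by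
    intro A x
    rw [Subtype.ext_iff]
    refine (Set.ext_iff.1 (hsupport A) x).trans
      ⟨fun hx => (hf_unique x A ⟨A.2, hx⟩).symm, fun h => h ▸ (hf x).2⟩
  simpa using hG.exists_isTree_leafCount_le_of_paths p hp _ hmem

theorem stmt_1_general {V : Type} [Fintype V] (G : SimpleGraph V)
    (hconn : G.Connected) :
    ml G ≤ 2 * pathCoverNumber G := by
  obtain ⟨S, hS, hcard⟩ := exists_isPathCover_card_eq_pathCoverNumber G
  obtain ⟨T, hTG, hT, hleaves⟩ := hS.exists_isTree_leafCount_le hconn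
  calc ml G ≤ leafCount T := Nat.sInf_le ⟨T, hTG, hT, rfl⟩
    _ ≤ 2 * pathCoverNumber G := hcard ▸ hleaves

theorem stmt_1 {V : Type} [Fintype V] (G : SimpleGraph V)
    (hconn : G.Connected) (hcard : 2 ≤ Fintype.card V) :
    ml G ≤ 2 * pathCoverNumber G :=
  stmt_1_general G hconn
end

section
/- Let G be a finite simple graph and let S be a vertex-disjoint path cover of G of minimum size μ(G) which, among all minimum-size vertex-disjoint path covers, maximizes the sum over P ∈ S of |P|², where |P| is the number of vertices of P. Let P, Q ∈ S be distinct paths with |P| ≤ |Q|. Then no endvertex of Q is adjacent in G to any vertex of P. -/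
/-!
Suppose an end `e` of `Q` is adjacent to a vertex `x` of `P`. Cut `P` just before `x` and
attach the piece running from `x` to the end of `P` to `Q` through the edge `ex`. If `x` is the
first vertex of `P`, this merges `P` and `Q` into one path, against the minimality of `|S|`.
Otherwise the number of paths is unchanged and `|P|² + |Q|²` becomes `(|P| - d)² + (|Q| + d)²`
for some `d ≥ 1`, which is larger because `|Q| ≥ |P|`, against the maximality of the sum of
squares.

A family of walks is a vertex-disjoint path cover exactly when the multiset of the vertices of
its walks contains every vertex once, so replacing some paths of a cover by walks with the same
vertex multiset yields a cover again.
-/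

open SimpleGraph

def IsVDPCover {V : Type} (G : SimpleGraph V)
    (S : Finset (Σ u v : V, G.Walk u v)) : Prop :=
  (∀ P ∈ S, P.2.2.IsPath) ∧ (∀ x : V, ∃! P, P ∈ S ∧ x ∈ P.2.2.support)

section

variable {V : Type*} {G : SimpleGraph V}

namespace SimpleGraph.Walk

theorem exists_walk_to_endpoint_support_eq {u v e : V} (p : G.Walk u v) (he : e = u ∨ e = v) :
    ∃ (c : V) (q : G.Walk c e), (q.support : Multiset V) = p.support := by
  rcases he with rfl | rfl
  · exact ⟨v, p.reverse, by rw [support_reverse, Multiset.coe_reverse]⟩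
  · exact ⟨u, p, rfl⟩

theorem exists_support_eq_add_of_ne_start {u v x : V} (p : G.Walk u v) (hx : x ∈ p.support)
    (hxu : x ≠ u) :
    ∃ (y : V) (W : G.Walk y u) (D : G.Walk x v),
      (p.support : Multiset V) = W.support + D.support := by
  classical
  obtain ⟨y, _, W, hW⟩ := not_nil_iff.mp (not_nil_of_ne (p := (p.takeUntil x hx).reverse) hxu)
  refine ⟨y, W, p.dropUntil x hx, ?_⟩
  have hT : ((p.takeUntil x hx).support : Multiset V) = x ::ₘ W.support := by
    rw [← Multiset.coe_reverse, ← support_reverse, hW, support_cons, Multiset.cons_coe]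
  conv_lhs => rw [← p.take_spec hx, support_append]
  rw [← Multiset.coe_add, hT, ← cons_tail_support (p.dropUntil x hx), List.tail_cons,
    ← Multiset.cons_coe, Multiset.add_cons, Multiset.cons_add]

theorem support_append_cons {u v w x : V} (p : G.Walk u v) (h : G.Adj v w) (q : G.Walk w x) :
    (p.append (cons h q)).support = p.support ++ q.support := by
  rw [support_append, support_cons, List.tail_cons]

end SimpleGraph.Walk

def vertexMultiset (S : Finset (Σ u v : V, G.Walk u v)) : Multiset V :=
  ∑ P ∈ S, (P.2.2.support : Multiset V)

theorem vertexMultiset_mono {R S : Finset (Σ u v : V, G.Walk u v)} (h : R ⊆ S) :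
    vertexMultiset R ≤ vertexMultiset S :=
  Finset.sum_le_sum_of_subset h

theorem support_le_vertexMultiset {S : Finset (Σ u v : V, G.Walk u v)}
    {P : Σ u v : V, G.Walk u v} (hP : P ∈ S) :
    (P.2.2.support : Multiset V) ≤ vertexMultiset S :=
  Finset.single_le_sum (fun _ _ => Multiset.zero_le _) hP

theorem vertexMultiset_pair [DecidableEq (Σ u v : V, G.Walk u v)]
    {P Q : Σ u v : V, G.Walk u v} (h : P ≠ Q) :
    vertexMultiset {P, Q} = (P.2.2.support : Multiset V) + Q.2.2.support :=
  Finset.sum_pair h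

theorem vertexMultiset_sdiff_add [DecidableEq (Σ u v : V, G.Walk u v)]
    {R S : Finset (Σ u v : V, G.Walk u v)} (h : R ⊆ S) :
    vertexMultiset (S \ R) + vertexMultiset R = vertexMultiset S :=
  Finset.sum_sdiff h

end

theorem Finset.sum_sdiff_union_add {ι M : Type*} [AddCommMonoid M] [DecidableEq ι]
    {R S N : Finset ι} (f : ι → M) (hRS : R ⊆ S) (h : Disjoint (S \ R) N) :
    ∑ i ∈ S \ R ∪ N, f i + ∑ i ∈ R, f i = ∑ i ∈ S, f i + ∑ i ∈ N, f i := by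
  rw [Finset.sum_union h, add_right_comm, Finset.sum_sdiff hRS]

variable {V : Type} {G : SimpleGraph V}

theorem isVDPCover_iff_count_vertexMultiset [DecidableEq V]
    {S : Finset (Σ u v : V, G.Walk u v)} :
    IsVDPCover G S ↔ ∀ z, (vertexMultiset S).count z = 1 := by
  have hcount : (∀ P ∈ S, P.2.2.IsPath) →
      ∀ z, (vertexMultiset S).count z = (S.filter fun P => z ∈ P.2.2.support).card := by
    intro hpath z
    rw [vertexMultiset, Multiset.count_sum', Finset.card_filter]
    refine Finset.sum_congr rfl fun P hP => ?_
    rw [Multiset.coe_count, (hpath P hP).support_nodup.count]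
  refine ⟨fun hS z => ?_, fun h => ?_⟩
  · rw [hcount hS.1, Finset.card_eq_one_iff_existsUnique]
    simpa only [Finset.mem_filter] using hS.2 z
  · have hnodup : (vertexMultiset S).Nodup :=
      Multiset.nodup_iff_count_le_one.mpr fun z => (h z).le
    have hpath : ∀ P ∈ S, P.2.2.IsPath := fun P hP =>
      (Walk.isPath_def _).mpr (Multiset.nodup_of_le (support_le_vertexMultiset hP) hnodup)
    refine ⟨hpath, fun z => ?_⟩
    have hz := h z
    rw [hcount hpath, Finset.card_eq_one_iff_existsUnique] at hz
    simpa only [Finset.mem_filter] using hz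

namespace IsVDPCover

variable {S R N : Finset (Σ u v : V, G.Walk u v)}

theorem nodup_vertexMultiset (hS : IsVDPCover G S) : (vertexMultiset S).Nodup := by
  classical
  exact Multiset.nodup_iff_count_le_one.mpr fun z =>
    (isVDPCover_iff_count_vertexMultiset.mp hS z).le

variable [DecidableEq (Σ u v : V, G.Walk u v)]

theorem disjoint_sdiff (hS : IsVDPCover G S) (hRS : R ⊆ S)
    (hN : vertexMultiset N = vertexMultiset R) : Disjoint (S \ R) N := by
  have hnodup := hS.nodup_vertexMultiset
  rw [← vertexMultiset_sdiff_add hRS, ← hN, Multiset.nodup_add] at hnodup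
  refine Finset.disjoint_left.mpr fun B hBSR hBN => ?_
  have hB : B.1 ∈ (B.2.2.support : Multiset V) := Multiset.mem_coe.mpr B.2.2.start_mem_support
  exact Multiset.disjoint_left.mp hnodup.2.2
    (Multiset.mem_of_le (support_le_vertexMultiset hBSR) hB)
    (Multiset.mem_of_le (support_le_vertexMultiset hBN) hB)

theorem sdiff_union (hS : IsVDPCover G S) (hRS : R ⊆ S)
    (hN : vertexMultiset N = vertexMultiset R) : IsVDPCover G (S \ R ∪ N) := by
  classical
  have hvm : vertexMultiset (S \ R ∪ N) = vertexMultiset S := by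
    rw [vertexMultiset, Finset.sum_union (hS.disjoint_sdiff hRS hN), ← vertexMultiset,
      ← vertexMultiset, hN, vertexMultiset_sdiff_add hRS]
  rw [isVDPCover_iff_count_vertexMultiset, hvm]
  exact isVDPCover_iff_count_vertexMultiset.mp hS

variable {P Q : Σ u v : V, G.Walk u v} {c e : V}

theorem exists_card_lt_of_adj_start (hS : IsVDPCover G S) (hP : P ∈ S) (hQ : Q ∈ S)
    (hPQ : P ≠ Q) (q : G.Walk c e) (hq : (q.support : Multiset V) = Q.2.2.support)
    (hadj : G.Adj e P.1) : ∃ S', IsVDPCover G S' ∧ S'.card < S.card := by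
  let M : Σ u v : V, G.Walk u v := ⟨c, P.2.1, q.append (.cons hadj P.2.2)⟩
  have hRS : {P, Q} ⊆ S := Finset.insert_subset hP (Finset.singleton_subset_iff.mpr hQ)
  have hN : vertexMultiset {M} = vertexMultiset {P, Q} := by
    rw [vertexMultiset, Finset.sum_singleton, vertexMultiset_pair hPQ, Walk.support_append_cons,
      ← Multiset.coe_add, hq, add_comm]
  refine ⟨S \ {P, Q} ∪ {M}, hS.sdiff_union hRS hN, ?_⟩
  have hcard := Finset.sum_sdiff_union_add (fun _ => 1) hRS (hS.disjoint_sdiff hRS hN)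
  simp only [← Finset.card_eq_sum_ones, Finset.card_pair hPQ, Finset.card_singleton] at hcard
  omega

theorem exists_sum_sq_lt_of_adj (hS : IsVDPCover G S) (hP : P ∈ S) (hQ : Q ∈ S)
    (hPQ : P ≠ Q) (hlen : P.2.2.support.length ≤ Q.2.2.support.length)
    (q : G.Walk c e) (hq : (q.support : Multiset V) = Q.2.2.support) {x : V}
    (hadj : G.Adj e x) (hx : x ∈ P.2.2.support) (hxP : x ≠ P.1) :
    ∃ S', IsVDPCover G S' ∧ S'.card = S.card ∧
      ∑ A ∈ S, A.2.2.support.length ^ 2 < ∑ A ∈ S', A.2.2.support.length ^ 2 := by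
  obtain ⟨y, W, D, hWD⟩ := P.2.2.exists_support_eq_add_of_ne_start hx hxP
  let M : Σ u v : V, G.Walk u v := ⟨c, P.2.1, q.append (.cons hadj D)⟩
  let W' : Σ u v : V, G.Walk u v := ⟨y, P.1, W⟩
  have hRS : {P, Q} ⊆ S := Finset.insert_subset hP (Finset.singleton_subset_iff.mpr hQ)
  have hMW : (M.2.2.support : Multiset V) + W'.2.2.support = P.2.2.support + Q.2.2.support := by
    rw [Walk.support_append_cons, ← Multiset.coe_add, hq, hWD]
    abel
  have hMW' : M ≠ W' := by
    have hnodup : ((M.2.2.support : Multiset V) + W'.2.2.support).Nodup := by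
      rw [hMW, ← vertexMultiset_pair hPQ]
      exact Multiset.nodup_of_le (vertexMultiset_mono hRS) hS.nodup_vertexMultiset
    intro h
    rw [h, Multiset.nodup_add] at hnodup
    exact Multiset.disjoint_left.mp hnodup.2.2 (Multiset.mem_coe.mpr W.start_mem_support)
      (Multiset.mem_coe.mpr W.start_mem_support)
  have hN : vertexMultiset {M, W'} = vertexMultiset {P, Q} := by
    rw [vertexMultiset_pair hMW', vertexMultiset_pair hPQ, hMW]
  refine ⟨S \ {P, Q} ∪ {M, W'}, hS.sdiff_union hRS hN, ?_, ?_⟩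
  · have hcard := Finset.sum_sdiff_union_add (fun _ => 1) hRS (hS.disjoint_sdiff hRS hN)
    simp only [← Finset.card_eq_sum_ones, Finset.card_pair hPQ, Finset.card_pair hMW'] at hcard
    omega
  · have hsum := Finset.sum_sdiff_union_add (fun A => A.2.2.support.length ^ 2) hRS
      (hS.disjoint_sdiff hRS hN)
    rw [Finset.sum_pair hPQ, Finset.sum_pair hMW'] at hsum
    have hPlen : P.2.2.support.length = W.support.length + D.support.length := by
      simpa using congrArg Multiset.card hWD
    have hMlen : M.2.2.support.length = Q.2.2.support.length + D.support.length := by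
      rw [Walk.support_append_cons, List.length_append, ← Multiset.coe_card, hq,
        Multiset.coe_card]
    have hD : 1 ≤ D.support.length := by simp [Walk.length_support]
    simp only [hPlen, hMlen] at hsum hlen ⊢
    nlinarith

end IsVDPCover

theorem stmt_5_general {V : Type} (G : SimpleGraph V)
    (S : Finset (Σ u v : V, G.Walk u v))
    (hS : IsVDPCover G S)
    (hmin : ∀ S' : Finset (Σ u v : V, G.Walk u v), IsVDPCover G S' → S.card ≤ S'.card)
    (hmax : ∀ S' : Finset (Σ u v : V, G.Walk u v), IsVDPCover G S' → S'.card = S.card →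
      (∑ P ∈ S', P.2.2.support.length ^ 2) ≤ ∑ P ∈ S, P.2.2.support.length ^ 2)
    (P Q : Σ u v : V, G.Walk u v) (hP : P ∈ S) (hQ : Q ∈ S) (hPQ : P ≠ Q)
    (hlen : P.2.2.support.length ≤ Q.2.2.support.length)
    (e : V) (he : e = Q.1 ∨ e = Q.2.1)
    (x : V) (hx : x ∈ P.2.2.support) :
    ¬ G.Adj e x := by
  classical
  intro hadj
  obtain ⟨c, q, hq⟩ := Q.2.2.exists_walk_to_endpoint_support_eq he
  by_cases hxP : x = P.1
  · subst hxP
    obtain ⟨S', hS', hlt⟩ := hS.exists_card_lt_of_adj_start hP hQ hPQ q hq hadj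
    exact (hmin S' hS').not_gt hlt
  · obtain ⟨S', hS', hcard, hlt⟩ := hS.exists_sum_sq_lt_of_adj hP hQ hPQ hlen q hq hadj hx hxP
    exact (hmax S' hS' hcard).not_gt hlt

theorem stmt_5 {V : Type} [Fintype V] (G : SimpleGraph V)
    (S : Finset (Σ u v : V, G.Walk u v))
    (hS : IsVDPCover G S)
    (hmin : ∀ S' : Finset (Σ u v : V, G.Walk u v), IsVDPCover G S' → S.card ≤ S'.card)
    (hmax : ∀ S' : Finset (Σ u v : V, G.Walk u v), IsVDPCover G S' → S'.card = S.card →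
      (∑ P ∈ S', P.2.2.support.length ^ 2) ≤ ∑ P ∈ S, P.2.2.support.length ^ 2)
    (P Q : Σ u v : V, G.Walk u v) (hP : P ∈ S) (hQ : Q ∈ S) (hPQ : P ≠ Q)
    (hlen : P.2.2.support.length ≤ Q.2.2.support.length)
    (e : V) (he : e = Q.1 ∨ e = Q.2.1)
    (x : V) (hx : x ∈ P.2.2.support) :
    ¬ G.Adj e x :=
  stmt_5_general G S hS hmin hmax P Q hP hQ hPQ hlen e he x hx
end

section
/- Let T be a finite tree with exactly k leaves, where k ≥ 3. Then there is a nonempty proper subset A of the vertex set of T such that the subgraph of T induced by A is a path and the subgraph of T induced by the complement of A is a tree with exactly k − 1 leaves. -/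
/-!
Pick a leaf `v` and a vertex `w` of degree at least three as close to `v` as possible (one exists,
since a tree all of whose degrees are at most two has at most two leaves). On the path
`w, a, …, v` every vertex after `w` has degree at most two, so its neighbours are exactly its
neighbours on the path: `A = {a, …, v}` induces a path and is joined to the rest of the tree only
by the edge `wa`. Hence deleting `A` leaves a tree; it loses the leaf `v`, and `w` keeps degree
at least two, so no new leaf appears.
-/

open SimpleGraph

/-- A graph is a path graph if its vertices can be listed (each exactly once) so
that two vertices are adjacent iff they are consecutive in the list. -/
def IsPathGraph {W : Type} (H : SimpleGraph W) : Prop :=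
  ∃ l : List W, l.Nodup ∧ (∀ x : W, x ∈ l) ∧
    ∀ x y : W, H.Adj x y ↔ ([x, y] <:+: l ∨ [y, x] <:+: l)

namespace SimpleGraph

variable {V : Type} {T : SimpleGraph V}

theorem isPathGraph_induce {G : SimpleGraph V} {l : List V} (hl : l.Nodup)
    (hadj : ∀ x ∈ l, ∀ y ∈ l, G.Adj x y ↔ [x, y] <:+: l ∨ [y, x] <:+: l) :
    IsPathGraph (G.induce {x | x ∈ l}) := by
  have key (x y : {x // x ∈ l}) : [x, y] <:+: l.attach ↔ [x.1, y.1] <:+: l := by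
    refine ⟨fun h => by simpa using h.map Subtype.val, fun h => ?_⟩
    obtain ⟨l', hl', he⟩ := (List.infix_map_iff (l₁ := l.attach) (l₂ := [x.1, y.1])).mp
      (by rwa [List.attach_map_subtype_val])
    obtain rfl : l' = [x, y] := List.map_injective_iff.mpr Subtype.val_injective he.symm
    exact hl'
  refine ⟨l.attach, hl.attach, List.mem_attach l, fun x y => ?_⟩
  rw [key, key]
  exact hadj x.1 x.2 y.1 y.2

theorem ncard_neighborSet_induce {G : SimpleGraph V} (s : Set V) (x : s) :
    ((G.induce s).neighborSet x).ncard = (G.neighborSet x ∩ s).ncard := by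
  rw [neighborSet_induce, ← Set.ncard_image_of_injective _ Subtype.val_injective,
    Subtype.image_preimage_coe, Set.inter_comm]

theorem leafCount_induce {G : SimpleGraph V} (s : Set V)
    (hs : ∀ x ∈ s, (G.neighborSet x ∩ s).ncard = 1 ↔ (G.neighborSet x).ncard = 1) :
    leafCount (G.induce s) = ({x | (G.neighborSet x).ncard = 1} ∩ s).ncard := by
  rw [leafCount, ← Set.ncard_image_of_injective _ Subtype.val_injective]
  congr 1
  ext x
  constructor
  · rintro ⟨⟨x, hx⟩, hleaf, rfl⟩
    exact ⟨(hs x hx).mp ((ncard_neighborSet_induce s _).symm.trans hleaf), hx⟩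
  · rintro ⟨hleaf, hx⟩
    exact ⟨⟨x, hx⟩, (ncard_neighborSet_induce s _).trans ((hs x hx).mpr hleaf), rfl⟩

theorem ncard_neighborSet_eq_degree_s8 (v : V) [Fintype (T.neighborSet v)] :
    (T.neighborSet v).ncard = T.degree v := by
  rw [Set.ncard_eq_toFinset_card', ← card_neighborSet_eq_degree, Set.toFinset_card]

theorem IsTree.exists_three_le_ncard_neighborSet [Finite V] (hT : T.IsTree)
    (hk : 3 ≤ leafCount T) : ∃ b, 3 ≤ (T.neighborSet b).ncard := by
  classical
  have := Fintype.ofFinite V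
  by_contra! hdeg
  have hsum : ∑ x, (T.degree x + if (T.neighborSet x).ncard = 1 then 1 else 0) ≤ ∑ _x : V, 2 :=
    Finset.sum_le_sum fun x _ => by
      have := hdeg x
      rw [ncard_neighborSet_eq_degree_s8] at this ⊢
      split_ifs <;> omega
  rw [Finset.sum_add_distrib, sum_degrees_eq_twice_card_edges, Finset.sum_boole,
    Nat.cast_id, Finset.sum_const, Finset.card_univ, smul_eq_mul, ← hT.card_edgeFinset]
    at hsum
  have hleaf : leafCount T = (Finset.univ.filter fun x => (T.neighborSet x).ncard = 1).card := by
    rw [leafCount, Set.ncard_eq_toFinset_card', Set.toFinset_ofPred]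
  omega

theorem Walk.IsPath.two_le_ncard_neighborSet_s8 [Finite V] {u v x : V} {q : T.Walk u v}
    (hq : q.IsPath) (hx : x ∈ q.support) (hxu : x ≠ u) (hxv : x ≠ v) :
    2 ≤ (T.neighborSet x).ncard := by
  obtain ⟨i, rfl, hi⟩ := Walk.mem_support_iff_exists_getVert.mp hx
  rw [← hq.ncard_neighborSet_toSubgraph_internal_eq_two (i := i)
    (by rintro rfl; exact hxu q.getVert_zero)
    (lt_of_le_of_ne hi (by rintro rfl; exact hxv q.getVert_length))]
  exact Set.ncard_le_ncard (q.toSubgraph.neighborSet_subset _)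

theorem Connected.induce_compl_of_adj_eq {G : SimpleGraph V} (hG : G.Connected) {S : Set V}
    {w : V} (hw : w ∉ S) (hS : ∀ x ∈ S, ∀ y ∉ S, G.Adj x y → y = w) :
    (G.induce Sᶜ).Connected := by
  have reach {x z : V} (q : G.Walk x z) (hx : x ∉ S) (hz : z = w) :
      (G.induce Sᶜ).Reachable ⟨x, hx⟩ ⟨w, hw⟩ := by
    induction q with
    | nil => subst hz; rfl
    | @cons x y z hxy q ih =>
      by_cases hy : y ∈ S
      · obtain rfl := hS y hy x hx hxy.symm
        rfl
      · exact (Adj.reachable (G := G.induce Sᶜ) (u := ⟨x, hx⟩) (v := ⟨y, hy⟩) hxy).trans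
          (ih hy hz)
  have : Nonempty ↥Sᶜ := ⟨⟨w, hw⟩⟩
  refine ⟨fun x y => ?_⟩
  obtain ⟨qx⟩ := hG.preconnected x w
  obtain ⟨qy⟩ := hG.preconnected y w
  exact (reach qx x.2 rfl).trans (reach qy y.2 rfl).symm

/-- The path `p` runs from `a` to the leaf `v`; it hangs from `w`, which is not part of it. -/
structure IsPendantPath {w a v : V} (hwa : T.Adj w a) (p : T.Walk a v) : Prop where
  isPath : (Walk.cons hwa p).IsPath
  ncard_neighborSet_le_two : ∀ x ∈ p.support, (T.neighborSet x).ncard ≤ 2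
  ncard_neighborSet_end : (T.neighborSet v).ncard = 1

namespace IsPendantPath

variable {w a v : V} {hwa : T.Adj w a} {p : T.Walk a v}

theorem tail {b : V} {hab : T.Adj a b} {p : T.Walk b v} (h : IsPendantPath hwa (.cons hab p)) :
    IsPendantPath hab p :=
  ⟨h.isPath.of_cons, fun x hx => h.ncard_neighborSet_le_two x (List.mem_cons_of_mem _ hx),
    h.ncard_neighborSet_end⟩

theorem start_notMem_support (h : IsPendantPath hwa p) : w ∉ p.support :=
  ((Walk.cons_isPath_iff _ _).mp h.isPath).2

variable [Finite V]

theorem adj_cases (h : IsPendantPath hwa p) {x y : V} (hx : x ∈ p.support)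
    (hxy : T.Adj x y) : [x, y] <:+: p.support ∨ [y, x] <:+: p.support ∨ (x = a ∧ y = w) := by
  induction p generalizing w with
  | nil =>
    obtain rfl : x = _ := by simpa using hx
    obtain ⟨z, hz⟩ := Set.ncard_eq_one.mp h.ncard_neighborSet_end
    have hw : w ∈ T.neighborSet x := hwa.symm
    have hy : y ∈ T.neighborSet x := hxy
    rw [hz] at hw hy
    exact Or.inr (Or.inr ⟨rfl, hy.trans hw.symm⟩)
  | @cons a b v hab p ih =>
    rw [Walk.support_cons] at hx ⊢
    rcases List.mem_cons.mp hx with rfl | hx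
    · have hwb : w ≠ b := fun hwb => h.start_notMem_support (by simp [hwb, p.start_mem_support])
      -- `x` already has the two distinct neighbours `w` and `b`, hence no others
      have hnbr : T.neighborSet x = {w, b} := by
        refine (Set.eq_of_subset_of_ncard_le ?_ ?_).symm
        · exact Set.insert_subset hwa.symm (Set.singleton_subset_iff.mpr hab)
        · rw [Set.ncard_pair hwb]
          exact h.ncard_neighborSet_le_two x (by simp)
      have hy : y ∈ ({w, b} : Set V) := hnbr ▸ hxy
      rcases hy with rfl | rfl
      · exact Or.inr (Or.inr ⟨rfl, rfl⟩)
      · rw [← p.cons_tail_support]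
        exact Or.inl ⟨[], _, rfl⟩
    · rcases ih h.tail hx with h' | h' | ⟨rfl, rfl⟩
      · exact Or.inl (List.infix_cons h')
      · exact Or.inr (Or.inl (List.infix_cons h'))
      · rw [← p.cons_tail_support]
        exact Or.inr (Or.inl ⟨[], _, rfl⟩)

theorem adj_iff_infix (h : IsPendantPath hwa p) {x y : V} (hx : x ∈ p.support)
    (hy : y ∈ p.support) : T.Adj x y ↔ [x, y] <:+: p.support ∨ [y, x] <:+: p.support := by
  refine ⟨fun hxy => ?_, ?_⟩
  · rcases h.adj_cases hx hxy with h' | h' | ⟨-, rfl⟩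
    · exact Or.inl h'
    · exact Or.inr h'
    · exact absurd hy h.start_notMem_support
  · rintro (h' | h')
    · exact List.isChain_pair.mp (p.isChain_adj_support.infix h')
    · exact (List.isChain_pair.mp (p.isChain_adj_support.infix h')).symm

theorem eq_of_adj_of_notMem (h : IsPendantPath hwa p) {x y : V} (hx : x ∈ p.support)
    (hy : y ∉ p.support) (hxy : T.Adj x y) : y = w := by
  rcases h.adj_cases hx hxy with h' | h' | ⟨-, rfl⟩
  · exact absurd (h'.subset (by simp)) hy
  · exact absurd (h'.subset (by simp)) hy
  · rfl

theorem eq_of_adj_start (h : IsPendantPath hwa p) {y : V} (hy : y ∈ p.support)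
    (hwy : T.Adj w y) : y = a := by
  rcases h.adj_cases hy hwy.symm with h' | h' | ⟨rfl, -⟩
  · exact absurd (h'.subset (by simp)) h.start_notMem_support
  · exact absurd (h'.subset (by simp)) h.start_notMem_support
  · rfl

theorem ncard_neighborSet_eq_two (h : IsPendantPath hwa p) {x : V} (hx : x ∈ p.support)
    (hxv : x ≠ v) : (T.neighborSet x).ncard = 2 :=
  (h.ncard_neighborSet_le_two x hx).antisymm <| h.isPath.two_le_ncard_neighborSet_s8
    (List.mem_cons_of_mem _ hx) (ne_of_mem_of_not_mem hx h.start_notMem_support) hxv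

theorem isPathGraph_induce_support (h : IsPendantPath hwa p) :
    IsPathGraph (T.induce {x | x ∈ p.support}) :=
  isPathGraph_induce h.isPath.of_cons.support_nodup fun _ hx _ hy => h.adj_iff_infix hx hy

theorem isTree_induce_compl (hT : T.IsTree) (h : IsPendantPath hwa p) :
    (T.induce {x | x ∈ p.support}ᶜ).IsTree :=
  ⟨hT.connected.induce_compl_of_adj_eq h.start_notMem_support
    fun _ hx _ hy hxy => h.eq_of_adj_of_notMem hx hy hxy, hT.isAcyclic.induce _⟩

theorem leafCount_induce_compl (h : IsPendantPath hwa p) (hw : 3 ≤ (T.neighborSet w).ncard) :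
    leafCount (T.induce {x | x ∈ p.support}ᶜ) = leafCount T - 1 := by
  rw [leafCount_induce]
  · have hleaves : {x | (T.neighborSet x).ncard = 1} ∩ {x | x ∈ p.support}ᶜ =
        {x | (T.neighborSet x).ncard = 1} \ {v} := by
      ext x
      simp only [Set.mem_inter_iff, Set.mem_sdiff, Set.mem_compl_iff, Set.mem_singleton_iff,
        Set.mem_ofPred_eq]
      refine ⟨fun ⟨hx1, hx⟩ => ⟨hx1, fun hxv => hx (hxv ▸ p.end_mem_support)⟩,
        fun ⟨hx1, hxv⟩ => ⟨hx1, fun hx => ?_⟩⟩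
      have := h.ncard_neighborSet_eq_two hx hxv
      omega
    have hv : v ∈ {x | (T.neighborSet x).ncard = 1} := h.ncard_neighborSet_end
    rw [hleaves, Set.ncard_sdiff_singleton_of_mem hv, leafCount]
  · intro x hx
    by_cases hxw : x = w
    · subst hxw
      have hnbr : T.neighborSet x ∩ {x | x ∈ p.support}ᶜ = T.neighborSet x \ {a} := by
        ext y
        refine ⟨fun ⟨hy, hyp⟩ => ⟨hy, fun hya => hyp (hya ▸ p.start_mem_support)⟩,
          fun ⟨hy, hya⟩ => ⟨hy, fun hyp => hya (h.eq_of_adj_start hyp hy)⟩⟩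
      rw [hnbr, Set.ncard_sdiff_singleton_of_mem (show a ∈ T.neighborSet x from hwa)]
      omega
    · have hsub : T.neighborSet x ⊆ {x | x ∈ p.support}ᶜ :=
        fun y hy hyp => hxw (h.eq_of_adj_of_notMem hyp hx (T.adj_symm hy))
      rw [Set.inter_eq_self_of_subset_left hsub]

end IsPendantPath

theorem IsTree.exists_isPendantPath [Finite V] (hT : T.IsTree) (hk : 3 ≤ leafCount T) :
    ∃ (w a v : V) (hwa : T.Adj w a) (p : T.Walk a v),
      IsPendantPath hwa p ∧ 3 ≤ (T.neighborSet w).ncard := by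
  classical
  obtain ⟨v, hv⟩ : {x | (T.neighborSet x).ncard = 1}.Nonempty :=
    Set.nonempty_of_ncard_ne_zero (by rw [leafCount] at hk; omega)
  obtain ⟨w, hw, hmin⟩ := Set.exists_min_image {b | 3 ≤ (T.neighborSet b).ncard} (T.dist · v)
    (Set.toFinite _) (hT.exists_three_le_ncard_neighborSet hk)
  obtain ⟨q, hq, hlen⟩ := hT.connected.exists_path_of_dist w v
  cases q with
  | nil => exact absurd hv (by simp only [Set.mem_ofPred_eq] at hw ⊢; omega)
  | cons hwa p =>
    refine ⟨w, _, v, hwa, p, ⟨hq, fun x hx => ?_, hv⟩, hw⟩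
    -- a vertex of degree at least three on `p` would be closer to `v` than `w`
    by_contra! hx3
    have := hmin x hx3
    have := T.dist_le (p.dropUntil x hx)
    have := p.length_dropUntil_le_length hx
    rw [Walk.length_cons] at hlen
    omega

end SimpleGraph

theorem stmt_8 {V : Type} [Fintype V] (T : SimpleGraph V) (k : ℕ)
    (htree : T.IsTree) (hleaf : leafCount T = k) (hk : 3 ≤ k) :
    ∃ A : Set V, A.Nonempty ∧ A ≠ Set.univ ∧
      IsPathGraph (T.induce A) ∧
      (T.induce (Aᶜ)).IsTree ∧ leafCount (T.induce (Aᶜ)) = k - 1 := by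
  subst hleaf
  obtain ⟨w, a, v, hwa, p, hp, hw⟩ := htree.exists_isPendantPath hk
  exact ⟨{x | x ∈ p.support}, ⟨a, p.start_mem_support⟩,
    (Set.ne_univ_iff_exists_notMem _).mpr ⟨w, hp.start_notMem_support⟩,
    hp.isPathGraph_induce_support, hp.isTree_induce_compl htree, hp.leafCount_induce_compl hw⟩
end

section
/- There exists a 2-connected cubic simple graph on 28 vertices that is not traceable. -/
open SimpleGraph

/-- A graph is cubic if every vertex has degree 3. -/
def IsCubic {V : Type} (G : SimpleGraph V) : Prop :=
  ∀ v : V, (G.neighborSet v).ncard = 3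

/-- A graph is 2-connected if it has at least 3 vertices, is connected, and
remains connected after deleting any single vertex. -/
def TwoConnected {V : Type} [Fintype V] (G : SimpleGraph V) : Prop :=
  3 ≤ Fintype.card V ∧ G.Connected ∧
    ∀ v : V, (G.induce ({v}ᶜ : Set V)).Connected

/-- A graph is traceable if it has a hamiltonian path. -/
def IsTraceable {V : Type} (G : SimpleGraph V) : Prop :=
  ∃ (u v : V) (p : G.Walk u v), p.IsPath ∧ ∀ x : V, x ∈ p.support

/-!
The graph is `K₄` with every edge replaced by a diamond. It is cubic by construction, and an
st-numbering shows that it is 2-connected. A hamiltonian path meets a set `S` of vertices at most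
`|S|` times, so it is cut by `S` into at most `|S| + 1` segments and `G - S` has at most `|S| + 1`
components. Removing the four vertices of `K₄` leaves the six diamonds as components.
-/

open Finset

theorem isCubic_iff {V : Type} {G : SimpleGraph V} [G.LocallyFinite] :
    IsCubic G ↔ ∀ v, G.degree v = 3 := by
  simp only [IsCubic, ← card_neighborSet_eq_degree, Set.ncard_eq_toFinset_card',
    Set.toFinset_card]

theorem Finite.apply_le_of_forall_ne_exists_lt {V β : Type*} [Finite V] [LinearOrder β]
    {f : V → β} {s : V} (h : ∀ v ≠ s, ∃ u, f u < f v) (v : V) : f s ≤ f v := by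
  have : Nonempty V := ⟨s⟩
  obtain ⟨v₀, hv₀⟩ := Finite.exists_min f
  obtain rfl | hne := eq_or_ne v₀ s
  · exact hv₀ v
  obtain ⟨u, hu⟩ := h v₀ hne
  exact absurd (hv₀ u) hu.not_ge

namespace SimpleGraph

variable {V : Type*} {G : SimpleGraph V}

theorem reachable_of_forall_exists_adj_lt {s : V} (rank : V → ℕ) {m : ℕ}
    (h : ∀ v ≠ s, rank v ≤ m → ∃ u, G.Adj v u ∧ rank u < rank v) {v : V} (hv : rank v ≤ m) :
    G.Reachable v s := by
  induction hrank : rank v using Nat.strong_induction_on generalizing v with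
  | _ n ih =>
    obtain rfl | hvs := eq_or_ne v s
    · rfl
    obtain ⟨u, hvu, hu⟩ := h v hvs hv
    exact hvu.reachable.trans (ih _ (hrank ▸ hu) (hu.le.trans hv) rfl)

/-- Vertices numbered at most `num w` descend to `s`, the others ascend to `t`, in both cases
avoiding `w`; and `s`, `t` are adjacent. -/
theorem connected_induce_compl_singleton_of_stNumbering [Finite V] {s t : V} (hst : G.Adj s t)
    (num : V → ℕ) (hlow : ∀ v ≠ s, ∃ u, G.Adj v u ∧ num u < num v)
    (hhigh : ∀ v ≠ t, ∃ u, G.Adj v u ∧ num v < num u) (w : V) :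
    (G.induce {w}ᶜ).Connected := by
  have hmin : ∀ v, num s ≤ num v :=
    Finite.apply_le_of_forall_ne_exists_lt fun v hv => (hlow v hv).imp fun _ => And.right
  have hmax : ∀ v, num v ≤ num t :=
    Finite.apply_le_of_forall_ne_exists_lt (β := ℕᵒᵈ) fun v hv =>
      (hhigh v hv).imp fun _ => And.right
  have down (hs : s ≠ w) (v : ({w}ᶜ : Set V)) (hv : num v ≤ num w) :
      (G.induce {w}ᶜ).Reachable v ⟨s, hs⟩ := by
    refine reachable_of_forall_exists_adj_lt (num ∘ Subtype.val) (fun x hxs hxw => ?_) hv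
    obtain ⟨u, hxu, hu⟩ := hlow x fun h => hxs (Subtype.ext h)
    exact ⟨⟨u, by rintro rfl; exact hu.not_ge hxw⟩, hxu, hu⟩
  have up (ht : t ≠ w) (v : ({w}ᶜ : Set V)) (hv : num w ≤ num v) :
      (G.induce {w}ᶜ).Reachable v ⟨t, ht⟩ := by
    refine reachable_of_forall_exists_adj_lt (num t - num ·.val) (m := num t - num w)
      (fun x hxt hxw => ?_) (by omega)
    obtain ⟨u, hxu, hu⟩ := hhigh x fun h => hxt (Subtype.ext h)
    have := hmax u
    exact ⟨⟨u, by rintro rfl; omega⟩, hxu, by simp only; omega⟩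
  rw [connected_iff_exists_forall_reachable]
  obtain rfl | hs := eq_or_ne s w
  · exact ⟨⟨t, hst.ne'⟩, fun v => (up hst.ne' v (hmin v)).symm⟩
  obtain rfl | ht := eq_or_ne t w
  · exact ⟨⟨s, hst.ne⟩, fun v => (down hst.ne v (hmax v)).symm⟩
  refine ⟨⟨s, hs⟩, fun v => ?_⟩
  rcases le_total (num v) (num w) with hv | hv
  · exact (down hs v hv).symm
  · have hst' : (G.induce {w}ᶜ).Adj ⟨s, hs⟩ ⟨t, ht⟩ := hst
    exact hst'.reachable.trans (up ht v hv).symm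

/-- Each value of `f` outside `S` that is new along the walk is entered from a vertex of `S`. -/
theorem Walk.card_image_filter_support_le {ι : Type*} [DecidableEq V] [DecidableEq ι]
    (S : Finset V) (f : V → ι) (hf : ∀ x y, G.Adj x y → x ∉ S → y ∉ S → f x = f y)
    {u v : V} (p : G.Walk u v) :
    #({x ∈ p.support.toFinset | x ∉ S}.image f) ≤
      p.support.countP (· ∈ S) + if u ∈ S then 0 else 1 := by
  induction p with
  | @nil w => by_cases hw : w ∈ S <;> simp [hw, filter_singleton]
  | @cons u x v hux p ih =>
    rw [support_cons, List.toFinset_cons, filter_insert, List.countP_cons]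
    by_cases hu : u ∈ S
    · simp only [hu, not_true_eq_false, if_false, decide_true, if_true]
      split_ifs at ih <;> omega
    by_cases hx : x ∈ S
    · simp only [hu, hx, not_false_eq_true, if_true, decide_false, if_false, image_insert]
        at ih ⊢
      exact (card_insert_le _ _).trans (by omega)
    · have hfx : f u ∈ {y ∈ p.support.toFinset | y ∉ S}.image f :=
        mem_image.2 ⟨x, by simp [hx], (hf u x hux hu hx).symm⟩
      simp only [hu, hx, not_false_eq_true, if_true, decide_false, if_false, image_insert,
        insert_eq_of_mem hfx] at ih ⊢
      omega

end SimpleGraph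

theorem twoConnected_of_stNumbering {V : Type} [Fintype V] {G : SimpleGraph V}
    (hcard : 3 ≤ Fintype.card V) {s t : V} (hst : G.Adj s t) (num : V → ℕ)
    (hlow : ∀ v ≠ s, ∃ u, G.Adj v u ∧ num u < num v)
    (hhigh : ∀ v ≠ t, ∃ u, G.Adj v u ∧ num v < num u) :
    TwoConnected G := by
  refine ⟨hcard, ?_, connected_induce_compl_singleton_of_stNumbering hst num hlow hhigh⟩
  rw [connected_iff_exists_forall_reachable]
  exact ⟨s, fun v =>
    (reachable_of_forall_exists_adj_lt num (fun x hx _ => hlow x hx) le_rfl).symm⟩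

theorem IsTraceable.card_image_compl_le {V : Type} {ι : Type*} [Fintype V] [DecidableEq V]
    [DecidableEq ι] {G : SimpleGraph V} (hG : IsTraceable G) (S : Finset V) (f : V → ι)
    (hf : ∀ x y, G.Adj x y → x ∉ S → y ∉ S → f x = f y) :
    #(Sᶜ.image f) ≤ #S + 1 := by
  obtain ⟨u, v, p, hp, hspan⟩ := hG
  have hsupp : p.support.toFinset = univ :=
    eq_univ_of_forall fun x => List.mem_toFinset.2 (hspan x)
  have hvisits : p.support.countP (· ∈ S) ≤ #S := by
    rw [List.countP_eq_length_filter, ← List.toFinset_card_of_nodup (hp.support_nodup.filter _)]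
    exact card_le_card fun x hx =>
      of_decide_eq_true (List.mem_filter.1 (List.mem_toFinset.1 hx)).2
  have := p.card_image_filter_support_le S f hf
  rw [hsupp, filter_notMem_eq_sdiff, ← compl_eq_univ_sdiff] at this
  split_ifs at this <;> omega

/-- The `k`-th edge `xy` of `K₄` on `0, …, 3` becomes the diamond on `a = 4k + 4, …, 4k + 7`, with
`a + 2, a + 3` adjacent to each other and to `a, a + 1`, and with the edges `xa`, `y(a + 1)`. -/
def diamondK4Edges : List (ℕ × ℕ) :=
  [(0, 1), (0, 2), (0, 3), (1, 2), (1, 3), (2, 3)].zipIdx.flatMap fun ((x, y), k) =>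
    let a := 4 * k + 4
    [(x, a), (y, a + 1), (a, a + 2), (a, a + 3), (a + 1, a + 2), (a + 1, a + 3), (a + 2, a + 3)]

def diamondK4 : SimpleGraph (Fin 28) :=
  fromRel fun a b => (a.val, b.val) ∈ diamondK4Edges

instance : DecidableRel diamondK4.Adj := inferInstanceAs (DecidableRel (fromRel _).Adj)

/-- Each diamond is traversed from its earlier to its later end; the diamond between `0` and `1`
comes last, so that the order ends at the neighbour `4` of `0`. -/
def diamondK4StOrder : List (Fin 28) :=
  [0, 8, 10, 11, 9, 2, 24, 26, 27, 25, 12, 14, 15, 13, 3, 21, 22, 23, 20, 17, 18, 19, 16, 1, 5, 6,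
    7, 4]

theorem diamondK4_isCubic : IsCubic diamondK4 :=
  isCubic_iff.2 (by decide)

theorem diamondK4_twoConnected : TwoConnected diamondK4 :=
  twoConnected_of_stNumbering (by simp) (s := 0) (t := 4) (by decide) diamondK4StOrder.idxOf
    (by decide) (by decide)

theorem diamondK4_not_traceable : ¬ IsTraceable diamondK4 := fun h =>
  absurd (IsTraceable.card_image_compl_le h (Iio 4) (fun v => v.val / 4) (by decide)) (by decide)

theorem stmt_11 :
    ∃ G : SimpleGraph (Fin 28), IsCubic G ∧ TwoConnected G ∧ ¬ IsTraceable G :=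
  ⟨diamondK4, diamondK4_isCubic, diamondK4_twoConnected, diamondK4_not_traceable⟩
end

section
/- Let G be a connected cubic simple graph with ml(G) ≥ 3 and let T be a spanning tree of G with exactly ml(G) leaves. Then the leaves of T form an independent set in G, i.e. no two vertices of degree 1 in T are adjacent in G. -/
open SimpleGraph

lemma aux_reach {V : Type} {K H : SimpleGraph V}
    (h : ∀ a b : V, K.Adj a b → H.Reachable a b) {a b : V} (hr : K.Reachable a b) :
    H.Reachable a b := by
  obtain ⟨p⟩ := hr
  induction p with
  | nil => exact Reachable.refl _
  | cons h' _ ih => exact (h _ _ h').trans ih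

lemma aux_interior {V : Type} {G : SimpleGraph V} {s t : V} (p : G.Walk s t)
    (hp : p.IsPath) : ∀ c ∈ p.support, c ≠ s → c ≠ t →
      ∃ d e, d ≠ e ∧ s(d, c) ∈ p.edges ∧ s(c, e) ∈ p.edges := by
  induction p with
  | nil => intro c hc hcs _; simp at hc; exact absurd hc hcs
  | @cons a b t h q ih =>
    intro c hc hcs hct
    rw [Walk.support_cons, List.mem_cons] at hc
    rcases hc with rfl | hc
    · exact absurd rfl hcs
    rcases eq_or_ne c b with rfl | hcb
    · cases q with
      | nil => exact absurd rfl hct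
      | @cons _ b2 _ h' q' =>
        refine ⟨a, b2, ?_, by simp, by simp⟩
        intro hab2
        have hns : a ∉ (Walk.cons h' q').support := (Walk.cons_isPath_iff h _).mp hp |>.2
        exact hns (by rw [hab2]; simp)
    · obtain ⟨d, e, hde, hd, he⟩ := ih hp.of_cons c hc hcb hct
      exact ⟨d, e, hde, by simp [hd], by simp [he]⟩

lemma aux_endnbr {V : Type} {T : SimpleGraph V} {u v : V} (P : T.Walk u v)
    (huv : u ≠ v) : ∃ b0 ∈ P.support, T.Adj u b0 := by
  cases P with
  | nil => exact absurd rfl huv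
  | cons h0 P0 => exact ⟨_, by simp, h0⟩

lemma aux_first {V : Type} {T : SimpleGraph V} {u v : V} (P : T.Walk u v)
    (hu : ∀ b, T.Adj u b → b ∈ P.support)
    (hv : ∀ b, T.Adj v b → b ∈ P.support) :
    ∀ {a : V} (_q : T.Walk a u), a ∉ P.support →
      ∃ c aout, c ∈ P.support ∧ c ≠ u ∧ c ≠ v ∧ T.Adj c aout ∧ aout ∉ P.support
  | _, Walk.nil, ha => absurd P.start_mem_support ha
  | a, Walk.cons (v := b) h q, ha => by
    by_cases hb : b ∈ P.support
    · refine ⟨_, a, hb, ?_, ?_, h.symm, ha⟩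
      · rintro rfl; exact ha (hu a h.symm)
      · rintro rfl; exact ha (hv a h.symm)
    · exact aux_first P hu hv q hb

lemma aux_branch {V : Type} {T : SimpleGraph V} {u v : V} (P : T.Walk u v)
    (hu : (T.neighborSet u).ncard = 1) (hv : (T.neighborSet v).ncard = 1)
    (huv : u ≠ v) {a : V} (q : T.Walk a u) (ha : a ∉ P.support) :
    ∃ c aout, c ∈ P.support ∧ c ≠ u ∧ c ≠ v ∧ T.Adj c aout ∧ aout ∉ P.support := by
  obtain ⟨b0, hb0P, hb0⟩ := aux_endnbr P huv
  obtain ⟨d0, hd0P, hd0⟩ : ∃ d0 ∈ P.support, T.Adj v d0 := by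
    obtain ⟨d0, hm, hd⟩ := aux_endnbr P.reverse huv.symm
    exact ⟨d0, by simpa using hm, hd⟩
  obtain ⟨x, hx⟩ := Set.ncard_eq_one.mp hu
  have hnsu : T.neighborSet u = {b0} := by
    have h2 : b0 ∈ T.neighborSet u := hb0
    rw [hx] at h2 ⊢; rw [h2]
  obtain ⟨y, hy⟩ := Set.ncard_eq_one.mp hv
  have hnsv : T.neighborSet v = {d0} := by
    have h2 : d0 ∈ T.neighborSet v := hd0
    rw [hy] at h2 ⊢; rw [h2]
  refine aux_first P ?_ ?_ q ha
  · intro b hb; have h2 : b ∈ T.neighborSet u := hb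
    rw [hnsu, Set.mem_singleton_iff] at h2; exact h2 ▸ hb0P
  · intro b hb; have h2 : b ∈ T.neighborSet v := hb
    rw [hnsv, Set.mem_singleton_iff] at h2; exact h2 ▸ hd0P

theorem stmt_17 {V : Type} [Fintype V] (G : SimpleGraph V)
    (hconn : G.Connected) (hcubic : IsCubic G) (hml : 3 ≤ ml G)
    (T : SimpleGraph V) (hle : T ≤ G) (htree : T.IsTree)
    (hmin : leafCount T = ml G) :
    ∀ u v : V, (T.neighborSet u).ncard = 1 → (T.neighborSet v).ncard = 1 →
      ¬ G.Adj u v := by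
  classical
  intro u v hu hv hadj
  rcases eq_or_ne u v with rfl | huv
  · exact G.irrefl hadj
  -- the leaf set L of T
  have hL : {z : V | (T.neighborSet z).ncard = 1}.ncard = ml G := hmin
  -- a third leaf z
  obtain ⟨z, hzL, hzu, hzv⟩ : ∃ z : V, (T.neighborSet z).ncard = 1 ∧ z ≠ u ∧ z ≠ v := by
    by_contra hcon
    push_neg at hcon
    have hsub : {z : V | (T.neighborSet z).ncard = 1} ⊆ {u, v} := by
      intro z1 hz1
      rcases eq_or_ne z1 u with rfl | h1
      · exact Set.mem_insert _ _
      · exact Set.mem_insert_of_mem _ (hcon z1 hz1 h1)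
    have h5 := Set.ncard_le_ncard hsub (Set.toFinite _)
    rw [Set.ncard_pair huv] at h5
    omega
  -- the u-v path in T
  obtain ⟨P, hP⟩ := (htree.isConnected.preconnected u v).some.toPath
  -- z is not on P
  have hzP : z ∉ P.support := by
    intro hmem
    obtain ⟨d1, e1, hde, hd, he⟩ := aux_interior P hP z hmem hzu hzv
    have hsub : ({d1, e1} : Set V) ⊆ T.neighborSet z := by
      intro x hx
      rcases hx with rfl | hx
      · exact (P.adj_of_mem_edges hd).symm
      · rw [Set.mem_singleton_iff] at hx; subst hx
        exact P.adj_of_mem_edges he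
    have h5 := Set.ncard_le_ncard hsub (Set.toFinite _)
    rw [Set.ncard_pair hde, hzL] at h5
    omega
  -- the branch vertex w with its off-path neighbor aout
  obtain ⟨w, aout, hwP, hwu, hwv, hwa, haP⟩ :=
    aux_branch P hu hv huv (htree.isConnected.preconnected z u).some hzP
  -- the path neighbors of w
  obtain ⟨d, e, hde, hdP, heP⟩ := aux_interior P hP w hwP hwu hwv
  have hwd : T.Adj w d := (P.adj_of_mem_edges hdP).symm
  have hwe : T.Adj w e := P.adj_of_mem_edges heP
  have hdmem : d ∈ P.support := P.fst_mem_support_of_mem_edges hdP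
  have hemem : e ∈ P.support := P.snd_mem_support_of_mem_edges heP
  have hwdP : s(w, d) ∈ P.edges := by rw [Sym2.eq_swap]; exact hdP
  -- w has T-degree at least 3
  have hdeg : 3 ≤ (T.neighborSet w).ncard := by
    have hsub : ({aout, d, e} : Set V) ⊆ T.neighborSet w := by
      intro x hx
      rcases hx with rfl | hx
      · exact hwa
      rcases hx with rfl | hx
      · exact hwd
      rw [Set.mem_singleton_iff] at hx; subst hx
      exact hwe
    have h3 : ({aout, d, e} : Set V).ncard = 3 := by
      rw [Set.ncard_insert_of_notMem (by
        intro hx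
        rcases hx with rfl | hx
        · exact haP hdmem
        · rw [Set.mem_singleton_iff] at hx; subst hx; exact haP hemem)
        (Set.toFinite _), Set.ncard_pair hde]
    have h5 := Set.ncard_le_ncard hsub (Set.toFinite _)
    omega
  -- u and v are not adjacent in T
  have htuv : ¬ T.Adj u v := by
    intro hT
    have hq := htree.IsAcyclic.path_unique ⟨P, hP⟩ (Path.singleton hT)
    have hPval : P = (Path.singleton hT : T.Walk u v) := congrArg Subtype.val hq
    rw [hPval] at hwP
    simp [Path.singleton] at hwP
    rcases hwP with rfl | rfl
    · exact hwu rfl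
    · exact hwv rfl
  -- the modified spanning tree
  set T2 : SimpleGraph V := T ⊔ fromEdgeSet {s(u, v)} with hT2def
  set T' : SimpleGraph V := T2 \ fromEdgeSet {s(w, d)} with hT'def
  have hT2G : T2 ≤ G := by
    refine sup_le hle ?_
    intro a b hab
    rw [fromEdgeSet_adj, Set.mem_singleton_iff, Sym2.eq_iff] at hab
    rcases hab.1 with ⟨rfl, rfl⟩ | ⟨rfl, rfl⟩
    exacts [hadj, hadj.symm]
  have hT'G : T' ≤ G := le_trans sdiff_le hT2G
  -- a cycle in T2 through s(w,d)
  have hPedges : ∀ e' ∈ P.edges, e' ∈ T2.edgeSet := fun e' he' =>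
    edgeSet_mono le_sup_left (P.edges_subset_edgeSet he')
  have hvu2 : T2.Adj v u := by
    refine (sup_adj _ _ _ _).mpr (Or.inr ((fromEdgeSet_adj _).mpr ⟨?_, huv.symm⟩))
    rw [Set.mem_singleton_iff, Sym2.eq_swap]
  have hcyc : ∃ (r : V) (p : T2.Walk r r), p.IsCycle ∧ s(w, d) ∈ p.edges := by
    refine ⟨v, Walk.cons hvu2 (P.transfer T2 hPedges), ?_, ?_⟩
    · rw [Walk.cons_isCycle_iff]
      refine ⟨hP.transfer _, ?_⟩
      rw [Walk.edges_transfer]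
      intro hmem
      exact htuv (P.adj_of_mem_edges hmem).symm
    · rw [Walk.edges_cons, Walk.edges_transfer]
      exact List.mem_cons_of_mem _ hwdP
  have hreach_wd : (T2 \ fromEdgeSet {s(w, d)}).Reachable w d :=
    (adj_and_reachable_delete_edges_iff_exists_cycle.mpr hcyc).2
  -- T' is connected
  have hT2conn : T2.Connected := htree.isConnected.mono le_sup_left
  have hT'conn : T'.Connected := by
    rw [connected_iff] at hT2conn ⊢
    refine ⟨fun a b => ?_, hT2conn.2⟩
    refine aux_reach ?_ (hT2conn.1 a b)
    intro a b hab
    by_cases he' : s(a, b) = s(w, d)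
    · rw [Sym2.eq_iff] at he'
      rcases he' with ⟨rfl, rfl⟩ | ⟨rfl, rfl⟩
      exacts [hreach_wd, hreach_wd.symm]
    · refine Adj.reachable ?_
      rw [hT'def, sdiff_adj]
      exact ⟨hab, fun hF => he' (Set.mem_singleton_iff.mp ((fromEdgeSet_adj _).mp hF).1)⟩
  -- T' is acyclic
  have hT'ac : T'.IsAcyclic := by
    intro r c hc
    by_cases he' : s(u, v) ∈ c.edges
    · have hr : (T' \ fromEdgeSet {s(u, v)}).Reachable u v :=
        (adj_and_reachable_delete_edges_iff_exists_cycle.mpr ⟨r, c, hc, he'⟩).2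
      have hle2 : (T' \ fromEdgeSet {s(u, v)}) ≤ (T \ fromEdgeSet {s(w, d)}) := by
        intro a b hab
        rw [sdiff_adj] at hab
        rw [sdiff_adj]
        rcases hab with ⟨hab1, hab2⟩
        rw [hT'def, sdiff_adj, hT2def, sup_adj] at hab1
        rcases hab1.1 with h6 | h6
        · exact ⟨h6, hab1.2⟩
        · exact absurd h6 hab2
      obtain ⟨p1⟩ := hr.mono hle2
      obtain ⟨p2, hp2⟩ := p1.toPath
      have hp2e : ∀ e' ∈ p2.edges, e' ∈ T.edgeSet := fun e' he'' =>
        edgeSet_mono sdiff_le (p2.edges_subset_edgeSet he'')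
      have hq := htree.IsAcyclic.path_unique ⟨p2.transfer T hp2e, hp2.transfer _⟩ ⟨P, hP⟩
      have hedges : P.edges = p2.edges := by
        have h7 : p2.transfer T hp2e = P := congrArg Subtype.val hq
        rw [← h7, Walk.edges_transfer]
      have h8 : s(d, w) ∈ p2.edges := hedges ▸ hdP
      have h9 := p2.adj_of_mem_edges h8
      rw [sdiff_adj] at h9
      refine h9.2 ((fromEdgeSet_adj _).mpr ⟨?_, h9.1.ne⟩)
      rw [Set.mem_singleton_iff, Sym2.eq_swap]
    · have hces : ∀ e' ∈ c.edges, e' ∈ T.edgeSet := by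
        intro e' he''
        have h4 : e' ∈ T2.edgeSet := edgeSet_mono sdiff_le (c.edges_subset_edgeSet he'')
        rw [hT2def, edgeSet_sup] at h4
        rcases h4 with h4 | h4
        · exact h4
        · rw [edgeSet_fromEdgeSet] at h4
          rw [Set.mem_singleton_iff.mp h4.1] at he''
          exact absurd he'' he'
      exact htree.IsAcyclic _ (hc.transfer hces)
  -- neighbors of u and v in T
  obtain ⟨b0, hb0⟩ := Set.ncard_eq_one.mp hu
  obtain ⟨d0, hd0⟩ := Set.ncard_eq_one.mp hv
  have hub0 : T.Adj u b0 := by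
    have h5 : b0 ∈ T.neighborSet u := by rw [hb0]; exact rfl
    exact h5
  have hvd0 : T.Adj v d0 := by
    have h5 : d0 ∈ T.neighborSet v := by rw [hd0]; exact rfl
    exact h5
  have hsne : s(u, v) ≠ s(w, d) := by
    rw [Ne, Sym2.eq_iff]
    rintro (⟨rfl, rfl⟩ | ⟨rfl, rfl⟩)
    · exact hwu rfl
    · exact hwv rfl
  -- description of T'-adjacency
  have hT'adj : ∀ a b : V, T'.Adj a b ↔
      (T.Adj a b ∨ (s(a, b) = s(u, v) ∧ a ≠ b)) ∧ ¬(s(a, b) = s(w, d) ∧ a ≠ b) := by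
    intro a b
    rw [hT'def, sdiff_adj, hT2def, sup_adj, fromEdgeSet_adj, fromEdgeSet_adj,
      Set.mem_singleton_iff, Set.mem_singleton_iff]
  -- w is not a leaf of T'
  have hw' : (T'.neighborSet w).ncard ≠ 1 := by
    have hsub : T.neighborSet w \ {d} ⊆ T'.neighborSet w := by
      intro b hb
      rw [Set.mem_diff, mem_neighborSet, Set.mem_singleton_iff] at hb
      rw [mem_neighborSet, hT'adj]
      refine ⟨Or.inl hb.1, ?_⟩
      rintro ⟨hs, -⟩
      rw [Sym2.eq_iff] at hs
      rcases hs with ⟨-, h6⟩ | ⟨h6, -⟩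
      · exact hb.2 h6
      · exact hwd.ne h6
    have h5 := Set.ncard_le_ncard hsub (Set.toFinite _)
    have h7 : T.neighborSet w ⊆ insert d (T.neighborSet w \ {d}) := by
      intro b hb
      by_cases h8 : b = d
      · exact h8 ▸ Set.mem_insert _ _
      · exact Set.mem_insert_of_mem _ ⟨hb, h8⟩
    have h9 := Set.ncard_le_ncard h7 (Set.toFinite _)
    have h10 := Set.ncard_insert_le d (T.neighborSet w \ {d})
    omega
  -- u is not a leaf of T' (unless d = u)
  have hu' : d ≠ u → (T'.neighborSet u).ncard ≠ 1 := by
    intro hdu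
    have hsub : ({v, b0} : Set V) ⊆ T'.neighborSet u := by
      intro b hb
      rw [mem_neighborSet, hT'adj]
      rcases hb with rfl | hb
      · exact ⟨Or.inr ⟨rfl, huv⟩, fun hs => hsne hs.1⟩
      · rw [Set.mem_singleton_iff] at hb; subst hb
        refine ⟨Or.inl hub0, ?_⟩
        rintro ⟨hs, -⟩
        rw [Sym2.eq_iff] at hs
        rcases hs with ⟨h6, -⟩ | ⟨h6, -⟩
        · exact hwu h6.symm
        · exact hdu h6.symm
    have hvb0 : v ≠ b0 := by rintro rfl; exact htuv hub0
    have h5 := Set.ncard_le_ncard hsub (Set.toFinite _)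
    rw [Set.ncard_pair hvb0] at h5
    omega
  -- v is not a leaf of T' (unless d = v)
  have hv' : d ≠ v → (T'.neighborSet v).ncard ≠ 1 := by
    intro hdv
    have hsub : ({u, d0} : Set V) ⊆ T'.neighborSet v := by
      intro b hb
      rw [mem_neighborSet, hT'adj]
      rcases hb with rfl | hb
      · refine ⟨Or.inr ⟨?_, huv.symm⟩, ?_⟩
        · rw [Sym2.eq_swap]
        · rintro ⟨hs, -⟩
          rw [Sym2.eq_swap] at hs
          exact hsne hs
      · rw [Set.mem_singleton_iff] at hb; subst hb
        refine ⟨Or.inl hvd0, ?_⟩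
        rintro ⟨hs, -⟩
        rw [Sym2.eq_iff] at hs
        rcases hs with ⟨h6, -⟩ | ⟨h6, -⟩
        · exact hwv h6.symm
        · exact hdv h6.symm
    have hud0 : u ≠ d0 := by rintro rfl; exact htuv hvd0.symm
    have h5 := Set.ncard_le_ncard hsub (Set.toFinite _)
    rw [Set.ncard_pair hud0] at h5
    omega
  -- other vertices keep their neighborhoods
  have hns_other : ∀ z1 : V, z1 ≠ u → z1 ≠ v → z1 ≠ w → z1 ≠ d →
      T'.neighborSet z1 = T.neighborSet z1 := by
    intro z1 h1 h2 h3 h4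
    ext b
    rw [mem_neighborSet, mem_neighborSet, hT'adj]
    constructor
    · rintro ⟨h5 | ⟨h5, -⟩, -⟩
      · exact h5
      · rw [Sym2.eq_iff] at h5
        rcases h5 with ⟨h6, -⟩ | ⟨h6, -⟩
        exacts [absurd h6 h1, absurd h6 h2]
    · intro h5
      refine ⟨Or.inl h5, ?_⟩
      rintro ⟨h6, -⟩
      rw [Sym2.eq_iff] at h6
      rcases h6 with ⟨h7, -⟩ | ⟨h7, -⟩
      exacts [h3 h7, h4 h7]
  -- leaves of T' are contained in (leaves of T minus u,v) plus d
  have hkey : {z : V | (T'.neighborSet z).ncard = 1} ⊆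
      ({z : V | (T.neighborSet z).ncard = 1} \ {u, v}) ∪ {d} := by
    intro z1 hz1
    rcases eq_or_ne z1 d with rfl | h4
    · exact Set.mem_union_right _ rfl
    rcases eq_or_ne z1 u with rfl | h1
    · exact absurd hz1 (hu' h4.symm)
    rcases eq_or_ne z1 v with rfl | h2
    · exact absurd hz1 (hv' h4.symm)
    rcases eq_or_ne z1 w with rfl | h3
    · exact absurd hz1 hw'
    refine Set.mem_union_left _ ⟨?_, ?_⟩
    · show (T.neighborSet z1).ncard = 1
      rw [← hns_other z1 h1 h2 h3 h4]
      exact hz1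
    · rintro (rfl | h6)
      · exact h1 rfl
      · exact h2 (Set.mem_singleton_iff.mp h6)
  -- T' is a spanning tree of G, so it has at least ml G leaves
  have hml_le : ml G ≤ leafCount T' := Nat.sInf_le ⟨T', hT'G, ⟨hT'conn, hT'ac⟩, rfl⟩
  -- but T' has fewer leaves than T
  have hsub2 : ({u, v} : Set V) ⊆ {z : V | (T.neighborSet z).ncard = 1} := by
    intro x hx
    rcases hx with rfl | hx
    · exact hu
    · rw [Set.mem_singleton_iff] at hx; subst hx; exact hv
  have h5 := Set.ncard_le_ncard hkey (Set.toFinite _)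
  have h6 : (({z : V | (T.neighborSet z).ncard = 1} \ {u, v}) ∪ {d}).ncard ≤
      ({z : V | (T.neighborSet z).ncard = 1} \ {u, v}).ncard + 1 := by
    rw [Set.union_singleton]
    exact Set.ncard_insert_le _ _
  have h7 : ({z : V | (T.neighborSet z).ncard = 1} \ {u, v}).ncard =
      {z : V | (T.neighborSet z).ncard = 1}.ncard - 2 := by
    rw [Set.ncard_diff hsub2, Set.ncard_pair huv]
  have h8 : leafCount T' = {z : V | (T'.neighborSet z).ncard = 1}.ncard := rfl
  omega
end

section
/- Every connected bipartite cubic simple graph on at least 3 vertices is 2-connected, i.e. it has no cut vertex. -/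
open SimpleGraph

/-- A graph is bipartite if its vertex set can be partitioned into two parts such
that every edge joins vertices in different parts. -/
def IsBipartiteGraph {V : Type} (G : SimpleGraph V) : Prop :=
  ∃ A : Set V, ∀ x y : V, G.Adj x y → (x ∈ A ↔ y ∉ A)


private lemma aux_walk {V : Type} (G : SimpleGraph V) (v : V) :
    ∀ {x : V} (_ : G.Walk x v) (hx : x ∈ ({v}ᶜ : Set V)),
    ∃ u, ∃ hu : u ∈ ({v}ᶜ : Set V), G.Adj v u ∧
      (G.induce ({v}ᶜ : Set V)).Reachable ⟨x, hx⟩ ⟨u, hu⟩ := by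
  intro x p
  induction p with
  | nil => intro hx; exact absurd rfl hx
  | @cons a b c h q ih =>
    intro hx
    by_cases hw : b = c
    · subst hw; exact ⟨a, hx, h.symm, Reachable.refl _⟩
    · obtain ⟨u, hu, hadj, hr⟩ := ih hw
      refine ⟨u, hu, hadj, Reachable.trans ?_ hr⟩
      exact Adj.reachable (by exact h : (G.induce ({c}ᶜ : Set V)).Adj ⟨a, hx⟩ ⟨b, hw⟩)

private lemma key {V : Type} [Fintype V] (G : SimpleGraph V)
    (hconn : G.Connected) (hcubic : ∀ v : V, (G.neighborSet v).ncard = 3)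
    (A : Set V) (hA : ∀ x y : V, G.Adj x y → (x ∈ A ↔ y ∉ A))
    (v : V) (hvA : v ∈ A) (x y : ({v}ᶜ : Set V))
    (hxy : ¬ (G.induce ({v}ᶜ : Set V)).Reachable x y) : False := by
  classical
  -- the component of x
  set P : V → Prop := fun u => ∃ h : u ∈ ({v}ᶜ : Set V),
      (G.induce ({v}ᶜ : Set V)).Reachable x ⟨u, h⟩ with hP
  set C : Finset V := Finset.univ.filter P with hC
  have hmemC : ∀ u, u ∈ C ↔ P u := by
    intro u; simp [hC]
  -- closure of C under adjacency avoiding v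
  have hclos : ∀ u w, P u → G.Adj u w → w ≠ v → P w := by
    rintro u w ⟨hu, hru⟩ hadj hw
    exact ⟨hw, hru.trans (Adj.reachable
      (by exact hadj : (G.induce ({v}ᶜ : Set V)).Adj ⟨u, hu⟩ ⟨w, hw⟩))⟩
  have hne : ∀ u, P u → u ≠ v := fun u hu => hu.1
  -- neighbor finsets
  have hN : ∀ u : V, (G.neighborFinset u).card = 3 := by
    intro u
    have := hcubic u
    rw [neighborFinset_def, ← Set.ncard_eq_toFinset_card']
    exact hcubic u
  set CA : Finset V := C.filter (· ∈ A) with hCA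
  set CB : Finset V := C.filter (· ∉ A) with hCB
  -- neighbors of CA-vertices lie in CB
  have hnbrA : ∀ u ∈ CA, G.neighborFinset u ⊆ CB := by
    intro u hu w hw
    rw [mem_neighborFinset] at hw
    rw [hCA, Finset.mem_filter, hmemC] at hu
    have hwA : w ∉ A := (hA u w hw).mp hu.2
    have hwv : w ≠ v := fun h => hwA (h ▸ hvA)
    rw [hCB, Finset.mem_filter, hmemC]
    exact ⟨hclos u w hu.1 hw hwv, hwA⟩
  -- neighbors of CB-vertices other than v lie in CA
  have hnbrB : ∀ w ∈ CB, ∀ u, G.Adj w u → u ≠ v → u ∈ CA := by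
    intro w hw u hadj huv
    rw [hCB, Finset.mem_filter, hmemC] at hw
    have huA : u ∈ A := by
      have := hA w u hadj
      tauto
    rw [hCA, Finset.mem_filter, hmemC]
    exact ⟨hclos w u hw.1 hadj huv, huA⟩
  -- double counting
  have hfilterA : ∀ u ∈ CA, CB.filter (fun w => G.Adj u w) = G.neighborFinset u := by
    intro u hu
    ext w
    simp only [Finset.mem_filter, mem_neighborFinset]
    exact ⟨fun h => h.2, fun h => ⟨hnbrA u hu (by rwa [mem_neighborFinset]), h⟩⟩
  have hfilterB : ∀ w ∈ CB, CA.filter (fun u => G.Adj u w) = (G.neighborFinset w).erase v := by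
    intro w hw
    ext u
    simp only [Finset.mem_filter, Finset.mem_erase, mem_neighborFinset]
    constructor
    · rintro ⟨huCA, hadj⟩
      refine ⟨?_, hadj.symm⟩
      rw [hCA, Finset.mem_filter, hmemC] at huCA
      exact hne u huCA.1
    · rintro ⟨huv, hadj⟩
      exact ⟨hnbrB w hw u hadj huv, hadj.symm⟩
  have hsum : ∑ u ∈ CA, (CB.filter (fun w => G.Adj u w)).card
      = ∑ w ∈ CB, (CA.filter (fun u => G.Adj u w)).card := by
    simp only [Finset.card_filter]
    exact Finset.sum_comm
  have hLHS : ∑ u ∈ CA, (CB.filter (fun w => G.Adj u w)).card = 3 * CA.card := by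
    rw [Finset.sum_congr rfl (fun u hu => by rw [hfilterA u hu, hN u])]
    simp [mul_comm]
  set e : ℕ := (CB.filter (fun w => G.Adj w v)).card with he
  have hstep : ∀ w ∈ CB,
      ((CA.filter (fun u => G.Adj u w)).card + if G.Adj w v then 1 else 0) = 3 := by
    intro w hw
    rw [hfilterB w hw]
    by_cases hadj : G.Adj w v
    · rw [if_pos hadj, Finset.card_erase_of_mem (by rwa [mem_neighborFinset]), hN w]
    · rw [if_neg hadj, Finset.erase_eq_of_notMem (by rwa [mem_neighborFinset]), hN w]
  have hRHS : (∑ w ∈ CB, (CA.filter (fun u => G.Adj u w)).card) + e = 3 * CB.card := by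
    rw [he, Finset.card_filter, ← Finset.sum_add_distrib, Finset.sum_congr rfl hstep]
    simp [mul_comm]
  -- hence 3 ∣ e
  have hdvd : 3 ∣ e := by omega
  -- e ≥ 1 : v has a neighbor in the component of x
  have he1 : 1 ≤ e := by
    obtain ⟨px⟩ := hconn x.1 v
    obtain ⟨u, hu, hadjvu, hru⟩ := aux_walk G v px x.2
    have hPu : P u := ⟨hu, hru⟩
    have huA : u ∉ A := (hA v u hadjvu).mp hvA
    have huCB : u ∈ CB := by
      rw [hCB, Finset.mem_filter, hmemC]; exact ⟨hPu, huA⟩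
    rw [he]
    refine Finset.card_pos.mpr ⟨u, ?_⟩
    rw [Finset.mem_filter]
    exact ⟨huCB, hadjvu.symm⟩
  -- e ≤ 2 : v has a neighbor in the component of y, which is not in C
  have he2 : e ≤ 2 := by
    obtain ⟨py⟩ := hconn y.1 v
    obtain ⟨u', hu', hadjvu', hru'⟩ := aux_walk G v py y.2
    have hu'C : ¬ P u' := by
      rintro ⟨h1, h2⟩
      exact hxy (h2.trans hru'.symm)
    have hsub : CB.filter (fun w => G.Adj w v) ⊆ (G.neighborFinset v).erase u' := by
      intro w hw
      rw [Finset.mem_filter] at hw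
      rw [Finset.mem_erase, mem_neighborFinset]
      refine ⟨?_, hw.2.symm⟩
      rintro rfl
      rw [hCB, Finset.mem_filter, hmemC] at hw
      exact hu'C hw.1.1
    have h1 : e ≤ ((G.neighborFinset v).erase u').card := Finset.card_le_card hsub
    have h2 : u' ∈ G.neighborFinset v := by rwa [mem_neighborFinset]
    rw [Finset.card_erase_of_mem h2, hN v] at h1
    omega
  omega

theorem stmt_19 {V : Type} [Fintype V] (G : SimpleGraph V)
    (hconn : G.Connected) (hcard : 3 ≤ Fintype.card V)
    (hbip : IsBipartiteGraph G) (hcubic : IsCubic G) :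
    ∀ v : V, (G.induce ({v}ᶜ : Set V)).Connected := by
  intro v
  rw [connected_iff]
  constructor
  · intro x y
    by_contra hxy
    obtain ⟨A, hA⟩ := hbip
    by_cases hvA : v ∈ A
    · exact key G hconn hcubic A hA v hvA x y hxy
    · refine key G hconn hcubic Aᶜ (fun a b h => ?_) v hvA x y hxy
      have := hA a b h
      simp only [Set.mem_compl_iff]
      tauto
  · have h1 : 1 < Fintype.card V := by omega
    obtain ⟨a, b, hab⟩ := Fintype.exists_pair_of_one_lt_card h1
    rcases eq_or_ne a v with rfl | ha
    · exact ⟨⟨b, fun h => hab (Set.eq_of_mem_singleton h).symm⟩⟩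
    · exact ⟨⟨a, ha⟩⟩
end
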